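/- Assume the star-connected occupied component C(0) of the origin is finite and nonempty. Then there exists a plus-connected S-cycle with all of its sites in Λ0 such that every infinite plus-connected path starting in C(0) — i.e., every injective function p : ℕ → ℤ × ℤ with p 0 ∈ C(0) and p n plus-adjacent to p (n+1) for all n — takes some value in the site set of the cycle. -/

import Mathlib

/-- A site of the square lattice, identified with a unit square via its centre. -/
abbrev Site := ℤ × ℤ

/-- Star adjacency: distinct sites whose coordinates differ by at most 1. -/
def starAdj (a b : Site) : Prop :=
  a ≠ b ∧ |a.1 - b.1| ≤ 1 ∧ |a.2 - b.2| ≤ 1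

/-- Plus adjacency: sites at ℓ¹-distance exactly 1. -/
def plusAdj (a b : Site) : Prop :=
  |a.1 - b.1| + |a.2 - b.2| = 1

/-- The star-connected occupied component `C(0)` of the origin. -/
def starComp (ω : Site → Bool) : Set Site :=
  {a | ω (0, 0) = true ∧ ω a = true ∧
    Relation.ReflTransGen (fun x y => ω x = true ∧ ω y = true ∧ starAdj x y) (0, 0) a}

/-- The plus-connected occupied component `C⁺(0)` of the origin. -/
def plusComp (ω : Site → Bool) : Set Site :=
  {a | ω (0, 0) = true ∧ ω a = true ∧
    Relation.ReflTransGen (fun x y => ω x = true ∧ ω y = true ∧ plusAdj x y) (0, 0) a}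

/-- `Λ₀`: vacant sites star-adjacent to some site of `C(0)`. -/
def lambda0 (ω : Site → Bool) : Set Site :=
  {a | ω a = false ∧ ∃ b ∈ starComp ω, starAdj a b}

/-- `Λ₀⁺`: vacant sites star-adjacent to some site of `C⁺(0)`. -/
def lambda0Plus (ω : Site → Bool) : Set Site :=
  {a | ω a = false ∧ ∃ b ∈ plusComp ω, starAdj a b}

/-- A plus-connected `S`-cycle: a nonempty list of pairwise distinct sites,
consecutive ones plus-adjacent, and the last plus-adjacent to the first. -/
def IsPlusSCycle (L : List Site) : Prop :=
  L ≠ [] ∧ L.Nodup ∧ L.Chain' plusAdj ∧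
    ∀ a ∈ L.head?, ∀ b ∈ L.getLast?, plusAdj b a

/-- A star-connected `S`-cycle: a nonempty list of pairwise distinct sites,
consecutive ones star-adjacent, and the last star-adjacent to the first. -/
def IsStarSCycle (L : List Site) : Prop :=
  L ≠ [] ∧ L.Nodup ∧ L.Chain' starAdj ∧
    ∀ a ∈ L.head?, ∀ b ∈ L.getLast?, starAdj b a

/-- A finite set `A` surrounds a site `x ∉ A` if the plus-connected component
of `x` in the complement of `A` is finite. -/
def Surrounds (A : Set Site) (x : Site) : Prop :=
  x ∉ A ∧
    {y | Relation.ReflTransGen (fun u v => u ∉ A ∧ v ∉ A ∧ plusAdj u v) x y}.Finite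

lemma plusAdj_iff (a b : Site) : plusAdj a b ↔
    (b = (a.1 + 1, a.2) ∨ b = (a.1 - 1, a.2) ∨ b = (a.1, a.2 + 1) ∨ b = (a.1, a.2 - 1)) := by
  rcases a with ⟨a1, a2⟩; rcases b with ⟨b1, b2⟩
  unfold plusAdj
  rw [Prod.mk.injEq, Prod.mk.injEq, Prod.mk.injEq, Prod.mk.injEq]
  rcases abs_cases (a1 - b1) with ⟨h1, h1'⟩ | ⟨h1, h1'⟩ <;>
    rcases abs_cases (a2 - b2) with ⟨h2, h2'⟩ | ⟨h2, h2'⟩ <;> simp only [h1, h2] <;> omega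

lemma plusAdj_symm {a b : Site} (h : plusAdj a b) : plusAdj b a := by
  unfold plusAdj at *
  rw [abs_sub_comm b.1 a.1, abs_sub_comm b.2 a.2]; exact h

lemma plusAdj_to_star {a b : Site} (h : plusAdj a b) : starAdj a b := by
  rcases a with ⟨a1, a2⟩
  rw [plusAdj_iff] at h
  rcases h with rfl | rfl | rfl | rfl <;>
    refine ⟨?_, ?_, ?_⟩ <;>
      first
        | (simp only [ne_eq, Prod.mk.injEq, not_and]; intros; omega)
        | (rw [abs_le]; dsimp only; omega)

lemma starAdj_symm {a b : Site} (h : starAdj a b) : starAdj b a := by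
  obtain ⟨h1, h2, h3⟩ := h
  refine ⟨fun e => h1 e.symm, ?_, ?_⟩ <;> rw [abs_sub_comm] <;> assumption

/-- crossing of the horizontal ray at height `x.2 + 1/2`, to the right of `x`. -/
def cb (x u v : Site) : ℤ :=
  if u.1 = v.1 ∧ x.1 < u.1 ∧ u.2 = x.2 ∧ v.2 = x.2 + 1 then 1
  else if u.1 = v.1 ∧ x.1 < u.1 ∧ v.2 = x.2 ∧ u.2 = x.2 + 1 then -1
  else 0

/-- crossing of the vertical ray at column `x.1 + 1/2`, above `x`. -/
def cl (x u v : Site) : ℤ :=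
  if u.2 = v.2 ∧ x.2 < u.2 ∧ u.1 = x.1 ∧ v.1 = x.1 + 1 then 1
  else if u.2 = v.2 ∧ x.2 < u.2 ∧ v.1 = x.1 ∧ u.1 = x.1 + 1 then -1
  else 0

def iQ (x p : Site) : ℤ := if x.1 < p.1 ∧ x.2 < p.2 then 1 else 0

lemma step_decomp (x u v : Site) (h : plusAdj u v) :
    iQ x v - iQ x u = cb x u v + cl x u v := by
  rcases u with ⟨u1, u2⟩; rcases x with ⟨x1, x2⟩
  rw [plusAdj_iff] at h
  rcases h with rfl | rfl | rfl | rfl <;>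
    · simp only [iQ, cb, cl]; split_ifs <;>
        first
          | omega
          | (simp only [true_and] at *; omega)

def pSum (g : Site → Site → ℤ) : List Site → ℤ
  | u :: v :: l => g u v + pSum g (v :: l)
  | _ => 0

lemma pSum_congr (g g' : Site → Site → ℤ) (l : List Site)
    (h : ∀ u ∈ l, ∀ v ∈ l, g u v = g' u v) : pSum g l = pSum g' l := by
  induction l with
  | nil => rfl
  | cons a l ih =>
    cases l with
    | nil => rfl
    | cons b t =>
      simp only [pSum]
      rw [h a (by simp) b (by simp),
        ih (fun u hu v hv => h u (by simp [hu]) v (by simp [hv]))]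

lemma pSum_telescope (g : Site → ℤ) (a : Site) (l : List Site) :
    pSum (fun u v => g v - g u) (a :: l) = g (l.getLastD a) - g a := by
  induction l generalizing a with
  | nil => simp [pSum]
  | cons b t ih =>
    simp only [pSum]
    rw [ih b, List.getLastD_cons]
    ring

lemma pSum_add (g g' : Site → Site → ℤ) (l : List Site) :
    pSum (fun u v => g u v + g' u v) l = pSum g l + pSum g' l := by
  induction l with
  | nil => rfl
  | cons a l ih =>
    cases l with
    | nil => rfl
    | cons b t => simp only [pSum] at *; rw [ih]; ring

section S2

variable {r : Site → Site → Prop}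

lemma pSum_congr_chain (g g' : Site → Site → ℤ) (l : List Site)
    (hc : l.Chain' r)
    (h : ∀ u ∈ l, ∀ v ∈ l, r u v → g u v = g' u v) : pSum g l = pSum g' l := by
  induction l with
  | nil => rfl
  | cons a l ih =>
    cases l with
    | nil => rfl
    | cons b t =>
      rw [List.Chain', List.isChain_cons_cons] at hc
      simp only [pSum]
      rw [h a (by simp) b (by simp) hc.1,
        ih hc.2 (fun u hu v hv hr => h u (by simp [hu]) v (by simp [hv]) hr)]

lemma pSum_const_zero (l : List Site) : pSum (fun _ _ => (0:ℤ)) l = 0 := by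
  induction l with
  | nil => rfl
  | cons a l ih =>
    cases l with
    | nil => rfl
    | cons b t => simp only [pSum] at *; omega

lemma pSum_zero (g : Site → Site → ℤ) (l : List Site)
    (h : ∀ u ∈ l, ∀ v ∈ l, g u v = 0) : pSum g l = 0 := by
  rw [pSum_congr _ _ l h]; exact pSum_const_zero l

/-- closed plus-walk -/
def CW (L : List Site) : Prop := L ≠ [] ∧ (L ++ [L.headI]).Chain' plusAdj

def wd (x : Site) (L : List Site) : ℤ := pSum (cb x) (L ++ [L.headI])

def hd (x : Site) (L : List Site) : ℤ := pSum (cl x) (L ++ [L.headI])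

lemma mem_ext {L : List Site} (hL : L ≠ []) {z : Site} (hz : z ∈ L ++ [L.headI]) : z ∈ L := by
  rcases List.mem_append.1 hz with h | h
  · exact h
  · simp at h; subst h
    cases L with
    | nil => simp at hL
    | cons a t => simp [List.headI]

lemma wh_zero {L : List Site} (h : CW L) (x : Site) : wd x L + hd x L = 0 := by
  obtain ⟨hne, hch⟩ := h
  unfold wd hd
  rw [← pSum_add]
  have h1 : pSum (fun u v => cb x u v + cl x u v) (L ++ [L.headI])
      = pSum (fun u v => iQ x v - iQ x u) (L ++ [L.headI]) := by
    refine pSum_congr_chain _ _ _ hch (fun u _ v _ hr => (step_decomp x u v hr).symm)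
  rw [h1]
  cases L with
  | nil => simp at hne
  | cons a t =>
    have h2 : (a :: t) ++ [(a :: t).headI] = a :: (t ++ [a]) := by simp [List.headI]
    rw [h2, pSum_telescope]
    have h3 : ∀ (t : List Site) (b : Site), (t ++ [a]).getLastD b = a := by
      intro t
      induction t with
      | nil => intro b; rfl
      | cons c s ih => intro b; rw [List.cons_append, List.getLastD_cons]; exact ih c
    rw [h3]

    ring

lemma cb_shift (x u v : Site)
    (h1 : ¬(u = ((x.1+1, x.2) : Site) ∧ v = ((x.1+1, x.2+1) : Site)))
    (h2 : ¬(u = ((x.1+1, x.2+1) : Site) ∧ v = ((x.1+1, x.2) : Site))) :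
    cb x u v = cb (x.1 + 1, x.2) u v := by
  rcases u with ⟨u1, u2⟩; rcases v with ⟨v1, v2⟩; rcases x with ⟨x1, x2⟩
  simp only [Prod.mk.injEq, not_and] at h1 h2
  simp only [cb]
  split_ifs <;> first | rfl | omega |
    (exfalso; simp only [true_and] at *; omega) |
    (simp only [true_and, and_imp] at * ; omega)

lemma cl_shift (x u v : Site)
    (h1 : ¬(u = ((x.1, x.2+1) : Site) ∧ v = ((x.1+1, x.2+1) : Site)))
    (h2 : ¬(u = ((x.1+1, x.2+1) : Site) ∧ v = ((x.1, x.2+1) : Site))) :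
    cl x u v = cl (x.1, x.2 + 1) u v := by
  rcases u with ⟨u1, u2⟩; rcases v with ⟨v1, v2⟩; rcases x with ⟨x1, x2⟩
  simp only [Prod.mk.injEq, not_and] at h1 h2
  simp only [cl]
  split_ifs <;> first | rfl | omega |
    (exfalso; simp only [true_and] at *; omega) |
    (simp only [true_and, and_imp] at * ; omega)

lemma wd_shift (x : Site) (L : List Site)
    (h : ((x.1+1, x.2) : Site) ∉ L ∨ ((x.1+1, x.2+1) : Site) ∉ L) :
    wd x L = wd (x.1 + 1, x.2) L := by
  rcases eq_or_ne L [] with rfl | hne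
  · rfl
  · refine pSum_congr _ _ _ (fun u hu v hv => ?_)
    refine cb_shift x u v ?_ ?_ <;> rintro ⟨rfl, rfl⟩ <;>
      rcases h with h | h <;> exact h (mem_ext hne (by assumption))

lemma hd_shift (x : Site) (L : List Site)
    (h : ((x.1, x.2+1) : Site) ∉ L ∨ ((x.1+1, x.2+1) : Site) ∉ L) :
    hd x L = hd (x.1, x.2 + 1) L := by
  rcases eq_or_ne L [] with rfl | hne
  · rfl
  · refine pSum_congr _ _ _ (fun u hu v hv => ?_)
    refine cl_shift x u v ?_ ?_ <;> rintro ⟨rfl, rfl⟩ <;>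
      rcases h with h | h <;> exact h (mem_ext hne (by assumption))

end S2

section S3

lemma pSum_cyc_tel (g : Site → ℤ) (L : List Site) :
    pSum (fun u v => g v - g u) (L ++ [L.headI]) = 0 := by
  cases L with
  | nil => rfl
  | cons a t =>
    have h2 : (a :: t) ++ [(a :: t).headI] = a :: (t ++ [a]) := by simp [List.headI]
    rw [h2, pSum_telescope]
    have h3 : ∀ (t : List Site) (b : Site), (t ++ [a]).getLastD b = a := by
      intro t
      induction t with
      | nil => intro b; rfl
      | cons c s ih => intro b; rw [List.cons_append, List.getLastD_cons]; exact ih c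
    rw [h3]
    ring

lemma wd_zero_right (x : Site) (L : List Site) (h : ∀ u ∈ L, u.1 ≤ x.1) :
    wd x L = 0 := by
  cases L with
  | nil => rfl
  | cons a t =>
    refine pSum_zero _ _ (fun u hu v hv => ?_)
    have hu' := h u (mem_ext (by simp) hu)
    simp only [cb]
    split_ifs <;> omega

lemma wd_zero_rows (x : Site) (L : List Site) (h : ∀ u ∈ L, u.2 ≠ x.2 ∧ u.2 ≠ x.2 + 1) :
    wd x L = 0 := by
  cases L with
  | nil => rfl
  | cons a t =>
    refine pSum_zero _ _ (fun u hu v hv => ?_)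
    have hu' := h u (mem_ext (by simp) hu)
    simp only [cb]
    split_ifs <;> omega

lemma wd_zero_left (x : Site) (L : List Site) (hcw : CW L) (h : ∀ u ∈ L, x.1 < u.1) :
    wd x L = 0 := by
  obtain ⟨hne, hch⟩ := hcw
  unfold wd
  have h1 : pSum (cb x) (L ++ [L.headI])
      = pSum (fun u v => (if x.2 < v.2 then (1:ℤ) else 0) - (if x.2 < u.2 then (1:ℤ) else 0))
          (L ++ [L.headI]) := by
    refine pSum_congr_chain _ _ _ hch (fun u hu v hv hr => ?_)
    have hu' := h u (mem_ext hne hu)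
    rcases u with ⟨u1, u2⟩; rcases x with ⟨x1, x2⟩
    rw [plusAdj_iff] at hr
    rcases hr with rfl | rfl | rfl | rfl <;>
      · simp only [cb]; split_ifs <;>
          first
            | omega
            | (simp only [true_and] at *; omega)
  rw [h1, pSum_cyc_tel]

lemma wd_stepU {L : List Site} (hcw : CW L) {x y : Site}
    (hy : y ∉ L) (he : y = ((x.1, x.2 + 1) : Site)) : wd x L = wd y L := by
  have hh := hd_shift x L (Or.inl (he ▸ hy))
  have e1 := wh_zero hcw x
  have e2 := wh_zero hcw y
  rw [he] at e2 ⊢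
  omega

lemma wd_stepR {L : List Site} {x y : Site}
    (hy : y ∉ L) (he : y = ((x.1 + 1, x.2) : Site)) : wd x L = wd y L := by
  have := wd_shift x L (Or.inl (he ▸ hy))
  rw [he]; exact this

lemma wd_stepNE {L : List Site} (hcw : CW L) {x y : Site}
    (hy : y ∉ L) (he : y = ((x.1 + 1, x.2 + 1) : Site)) : wd x L = wd y L := by
  set z : Site := (x.1 + 1, x.2) with hz
  have h1 : wd x L = wd z L := wd_shift x L (Or.inr (he ▸ hy))
  have h2 : wd z L = wd y L := by
    have hh := hd_shift z L (Or.inl (by rw [hz]; dsimp only; exact he ▸ hy))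
    have e1 := wh_zero hcw z
    have e2 := wh_zero hcw y
    rw [he] at e2 ⊢
    rw [hz] at hh e1 ⊢
    dsimp only at hh e1 ⊢
    omega
  rw [h1, h2]

lemma wd_stepSE {L : List Site} (hcw : CW L) {x y : Site}
    (hx : x ∉ L) (hy : y ∉ L) (he : y = ((x.1 + 1, x.2 - 1) : Site)) : wd x L = wd y L := by
  set z : Site := (x.1, x.2 - 1) with hz
  have h1 : wd z L = wd x L := by
    have hh : hd z L = hd (z.1, z.2 + 1) L :=
      hd_shift z L (Or.inl (by rw [hz]; dsimp only; simpa using hx))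
    have e1 := wh_zero hcw z
    have e2 := wh_zero hcw x
    rw [hz] at hh e1 ⊢
    dsimp only at hh e1 ⊢
    have hx' : ((x.1, x.2 - 1 + 1) : Site) = x := by
      rcases x with ⟨x1, x2⟩; simp
    rw [hx'] at hh
    omega
  have h2 : wd z L = wd y L := by
    have := wd_shift z L (Or.inl (by rw [hz]; dsimp only; exact he ▸ hy))
    rw [he]
    rw [hz] at this
    dsimp only at this ⊢
    exact this
  rw [← h1, h2]

lemma wd_eq_of_starAdj {L : List Site} (hcw : CW L) {x y : Site}
    (hadj : starAdj x y) (hx : x ∉ L) (hy : y ∉ L) : wd x L = wd y L := by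
  obtain ⟨hne, h1, h2⟩ := hadj
  rw [abs_le] at h1 h2
  have hd1 : y.1 = x.1 + 1 ∨ y.1 = x.1 ∨ y.1 = x.1 - 1 := by omega
  have hd2 : y.2 = x.2 + 1 ∨ y.2 = x.2 ∨ y.2 = x.2 - 1 := by omega
  have hne' : ¬(y.1 = x.1 ∧ y.2 = x.2) := by
    rintro ⟨hc1, hc2⟩
    exact hne (Prod.ext hc1.symm hc2.symm)
  rcases hd1 with e1 | e1 | e1 <;> rcases hd2 with e2 | e2 | e2
  · exact wd_stepNE hcw hy (Prod.ext (by dsimp; omega) (by dsimp; omega))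
  · exact wd_stepR hy (Prod.ext (by dsimp; omega) (by dsimp; omega))
  · exact wd_stepSE hcw hx hy (Prod.ext (by dsimp; omega) (by dsimp; omega))
  · exact wd_stepU hcw hy (Prod.ext (by dsimp; omega) (by dsimp; omega))
  · exact absurd ⟨e1, e2⟩ hne'
  · exact (wd_stepU hcw hx (Prod.ext (by dsimp; omega) (by dsimp; omega))).symm
  · exact (wd_stepSE hcw hy hx (Prod.ext (by dsimp; omega) (by dsimp; omega))).symm
  · exact (wd_stepR hx (Prod.ext (by dsimp; omega) (by dsimp; omega))).symm
  · exact (wd_stepNE hcw hx (Prod.ext (by dsimp; omega) (by dsimp; omega))).symm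

end S3

section S4

lemma headI_append {A : List Site} (B : List Site) (hA : A ≠ []) :
    (A ++ B).headI = A.headI := by
  cases A with
  | nil => simp at hA
  | cons a t => rfl

lemma head?_eq {A : List Site} (hA : A ≠ []) : A.head? = some A.headI := by
  cases A with
  | nil => simp at hA
  | cons a t => rfl

lemma pSum_append (g : Site → Site → ℤ) (X Z : List Site) (y : Site) :
    pSum g (X ++ y :: Z) = pSum g (X ++ [y]) + pSum g (y :: Z) := by
  induction X with
  | nil =>
    simp only [List.nil_append]
    have h0 : pSum g [y] = 0 := rfl
    rw [h0]; ring
  | cons a X ih =>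
    cases X with
    | nil =>
      simp only [List.cons_append, List.nil_append]
      cases Z with
      | nil => simp [pSum]
      | cons z zs => simp only [pSum]; ring
    | cons b t =>
      simp only [List.cons_append, List.append_eq, pSum] at *
      rw [ih]; ring

lemma cw_split {A B : List Site} (h : CW (A ++ B)) (hA : A ≠ []) (hB : B ≠ [])
    (hh : A.headI = B.headI) :
    CW A ∧ CW B ∧ ∀ x, wd x (A ++ B) = wd x A + wd x B := by
  obtain ⟨hne, hch⟩ := h
  rw [headI_append B hA, List.append_assoc, List.Chain', List.isChain_append] at hch
  obtain ⟨hcA, hcB, hj⟩ := hch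
  have hBh : (B ++ [A.headI]).head? = some B.headI := by
    cases B with
    | nil => simp at hB
    | cons b t => rfl
  have hcwB : CW B := ⟨hB, by rw [← hh]; exact hcB⟩
  have hcwA : CW A := by
    refine ⟨hA, ?_⟩
    rw [List.Chain', List.isChain_append]
    refine ⟨hcA, List.isChain_singleton _, fun p hp q hq => ?_⟩
    simp only [List.head?_cons, Option.mem_def, Option.some.injEq] at hq
    subst hq
    have := hj p hp B.headI (by rw [hBh]; rfl)
    rw [hh]
    exact this
  refine ⟨hcwA, hcwB, fun x => ?_⟩
  unfold wd
  rw [headI_append B hA]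
  cases B with
  | nil => simp at hB
  | cons b t =>
    have e1 : (A ++ b :: t) ++ [A.headI] = A ++ b :: (t ++ [A.headI]) := by simp
    rw [e1, pSum_append]
    have e2 : b :: (t ++ [A.headI]) = (b :: t) ++ [A.headI] := rfl
    rw [e2, hh]
    rfl

lemma cw_rotate {A B : List Site} (h : CW (A ++ B)) :
    CW (B ++ A) ∧ ∀ x, wd x (A ++ B) = wd x (B ++ A) := by
  rcases eq_or_ne A [] with rfl | hA
  · constructor
    · simpa using h
    · intro x; simp
  rcases eq_or_ne B [] with rfl | hB
  · constructor
    · simpa using h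
    · intro x; simp
  obtain ⟨hne, hch⟩ := h
  rw [headI_append B hA, List.append_assoc, List.Chain', List.isChain_append] at hch
  obtain ⟨hcA, hcB, hj⟩ := hch
  have hBh : (B ++ [A.headI]).head? = some B.headI := by
    cases B with
    | nil => simp at hB
    | cons b t => rfl
  -- pieces of hcB : Chain' (B ++ [A.headI])
  rw [List.isChain_append] at hcB
  obtain ⟨hcB', _, hjB⟩ := hcB
  constructor
  · refine ⟨by simp [hB], ?_⟩
    rw [headI_append A hB, List.append_assoc, List.Chain', List.isChain_append]
    refine ⟨hcB', ?_, ?_⟩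
    · -- Chain' (A ++ [B.headI])
      rw [List.isChain_append]
      refine ⟨hcA, List.isChain_singleton _, fun p hp q hq => ?_⟩
      simp only [List.head?_cons, Option.mem_def, Option.some.injEq] at hq
      subst hq
      exact hj p hp B.headI (by rw [hBh]; rfl)
    · intro p hp q hq
      rw [head?_eq (by simp [hA] : A ++ [B.headI] ≠ [])] at hq
      simp only [Option.mem_def, Option.some.injEq] at hq
      subst hq
      rw [headI_append [B.headI] hA]
      exact hjB p hp A.headI (by simp)
  · intro x
    unfold wd
    rw [headI_append B hA, headI_append A hB]
    cases B with
    | nil => simp at hB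
    | cons b t =>
      cases A with
      | nil => simp at hA
      | cons a s =>
        show pSum (cb x) ((a :: s ++ b :: t) ++ [a]) = pSum (cb x) ((b :: t ++ a :: s) ++ [b])
        rw [List.append_assoc (a :: s) (b :: t) [a], List.append_assoc (b :: t) (a :: s) [b]]
        have L1 : pSum (cb x) ((a :: s) ++ ((b :: t) ++ [a]))
            = pSum (cb x) ((a :: s) ++ [b]) + pSum (cb x) ((b :: t) ++ [a]) :=
          pSum_append (cb x) (a :: s) (t ++ [a]) b
        have R1 : pSum (cb x) ((b :: t) ++ ((a :: s) ++ [b]))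
            = pSum (cb x) ((b :: t) ++ [a]) + pSum (cb x) ((a :: s) ++ [b]) :=
          pSum_append (cb x) (b :: t) (s ++ [b]) a
        rw [L1, R1]
        ring

lemma exists_dup {l : List Site} (h : ¬ l.Nodup) :
    ∃ d l1 l2 l3, l = l1 ++ d :: l2 ++ d :: l3 := by
  induction l with
  | nil => simp at h
  | cons a t ih =>
    by_cases ha : a ∈ t
    · obtain ⟨s, u, rfl⟩ := List.append_of_mem ha
      exact ⟨a, [], s, u, rfl⟩
    · have ht : ¬ t.Nodup := by
        intro hnd
        exact h (List.nodup_cons.2 ⟨ha, hnd⟩)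
      obtain ⟨d, l1, l2, l3, rfl⟩ := ih ht
      exact ⟨d, a :: l1, l2, l3, rfl⟩

lemma loop_erase (n : ℕ) : ∀ (W : List Site), W.length ≤ n → CW W → ∀ x : Site, wd x W ≠ 0 →
    ∃ L, CW L ∧ L.Nodup ∧ (∀ z ∈ L, z ∈ W) ∧ wd x L ≠ 0 := by
  induction n with
  | zero =>
    intro W hl hcw x hx
    exact absurd (List.length_eq_zero_iff.mp (Nat.le_zero.mp hl)) hcw.1
  | succ n ih =>
    intro W hl hcw x hx
    by_cases hnd : W.Nodup
    · exact ⟨W, hcw, hnd, fun z hz => hz, hx⟩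
    · obtain ⟨d, l1, l2, l3, rfl⟩ := exists_dup hnd
      -- rotate
      have hrot := cw_rotate (A := l1) (B := d :: l2 ++ d :: l3) (by simpa using hcw)
      obtain ⟨hcw', hwd'⟩ := hrot
      have hwx : wd x ((d :: l2 ++ d :: l3) ++ l1) = wd x (l1 ++ d :: l2 ++ d :: l3) := by
        rw [← hwd' x]; simp
      -- split
      have hsplit := cw_split (A := d :: l2) (B := d :: (l3 ++ l1))
        (by
          have : (d :: l2 ++ d :: l3) ++ l1 = (d :: l2) ++ (d :: (l3 ++ l1)) := by simp
          rw [this] at hcw'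
          exact hcw')
        (by simp) (by simp) rfl
      obtain ⟨hcw1, hcw2, hadd⟩ := hsplit
      have hval : wd x (d :: l2) + wd x (d :: (l3 ++ l1)) = wd x (l1 ++ d :: l2 ++ d :: l3) := by
        rw [← hadd x, ← hwx]
        congr 1
        simp
      have hlen : (l1 ++ d :: l2 ++ d :: l3).length = l1.length + l2.length + l3.length + 2 := by
        simp; omega
      by_cases h1 : wd x (d :: l2) ≠ 0
      · obtain ⟨L, c1, c2, c3, c4⟩ := ih (d :: l2) (by simp at hl ⊢; omega) hcw1 x h1
        exact ⟨L, c1, c2, fun z hz => by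
          have := c3 z hz; simp at this ⊢; tauto, c4⟩
      · push_neg at h1
        have h2 : wd x (d :: (l3 ++ l1)) ≠ 0 := by
          intro h0
          rw [h0, h1] at hval
          exact hx hval.symm
        obtain ⟨L, c1, c2, c3, c4⟩ := ih (d :: (l3 ++ l1)) (by simp at hl ⊢; omega) hcw2 x h2
        exact ⟨L, c1, c2, fun z hz => by
          have := c3 z hz; simp at this ⊢; tauto, c4⟩

end S4

section S5

open Classical in
noncomputable def memD (D : Set Site) (p : Site) : Prop := p ∈ D

def rot (v : Site) : Site := (-v.2, v.1)

open Classical in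
noncomputable def bsucc (D : Set Site) (e : Site × Site) : Site × Site :=
  if e.2 + rot (e.2 - e.1) ∈ D then (e.2 + rot (e.2 - e.1), e.2)
  else if e.1 + rot (e.2 - e.1) ∈ D then (e.1 + rot (e.2 - e.1), e.2 + rot (e.2 - e.1))
  else (e.1, e.1 + rot (e.2 - e.1))

open Classical in
noncomputable def bpred (D : Set Site) (e : Site × Site) : Site × Site :=
  if e.2 - rot (e.2 - e.1) ∈ D then (e.2 - rot (e.2 - e.1), e.2)
  else if e.1 - rot (e.2 - e.1) ∈ D then (e.1 - rot (e.2 - e.1), e.2 - rot (e.2 - e.1))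
  else (e.1, e.1 - rot (e.2 - e.1))

def BE (D : Set Site) : Set (Site × Site) :=
  {e | e.1 ∈ D ∧ e.2 ∉ D ∧ plusAdj e.1 e.2}

lemma sigma_cases {d o : Site} (h : plusAdj d o) :
    o = (d.1 + 1, d.2) ∨ o = (d.1 - 1, d.2) ∨ o = (d.1, d.2 + 1) ∨ o = (d.1, d.2 - 1) :=
  (plusAdj_iff d o).1 h

lemma plusAdj_mk {a1 a2 b1 b2 : ℤ} (h : (a1 = b1 ∧ (a2 = b2 + 1 ∨ a2 = b2 - 1)) ∨
    (a2 = b2 ∧ (a1 = b1 + 1 ∨ a1 = b1 - 1))) : plusAdj (a1, a2) (b1, b2) := by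
  rw [plusAdj_iff]
  rcases h with ⟨e, h | h⟩ | ⟨e, h | h⟩ <;> subst e <;> subst h <;> simp [Prod.ext_iff] <;> omega

lemma bsucc_mem {D : Set Site} {e : Site × Site} (he : e ∈ BE D) : bsucc D e ∈ BE D := by
  obtain ⟨h1, h2, h3⟩ := he
  rcases e with ⟨⟨d1, d2⟩, o⟩
  dsimp only at h1 h2 h3
  show _ ∈ BE D
  rcases sigma_cases h3 with rfl | rfl | rfl | rfl
  · -- sigma = (1,0)
    have e1 : ((d1 + 1, d2) : Site) + rot (((d1 + 1, d2) : Site) - ((d1, d2) : Site)) = ((d1 + 1, d2 + 1) : Site) := by simp only [Prod.mk_sub_mk, rot, Prod.mk_add_mk, Prod.mk.injEq]; constructor <;> ring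
    have e2 : ((d1, d2) : Site) + rot (((d1 + 1, d2) : Site) - ((d1, d2) : Site)) = ((d1, d2 + 1) : Site) := by simp only [Prod.mk_sub_mk, rot, Prod.mk_add_mk, Prod.mk.injEq]; constructor <;> ring
    simp only [bsucc, e1, e2]
    split_ifs with hA hB
    · rw [e1] at hA
      exact ⟨hA, h2, plusAdj_mk (by omega)⟩
    · rw [e1] at hA; rw [e2] at hB
      exact ⟨hB, hA, plusAdj_mk (by omega)⟩
    · rw [e1] at hA; rw [e2] at hB
      exact ⟨h1, hB, plusAdj_mk (by omega)⟩
  · -- sigma = (-1,0)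
    have e1 : ((d1 - 1, d2) : Site) + rot (((d1 - 1, d2) : Site) - ((d1, d2) : Site)) = ((d1 - 1, d2 - 1) : Site) := by simp only [Prod.mk_sub_mk, rot, Prod.mk_add_mk, Prod.mk.injEq]; constructor <;> ring
    have e2 : ((d1, d2) : Site) + rot (((d1 - 1, d2) : Site) - ((d1, d2) : Site)) = ((d1, d2 - 1) : Site) := by simp only [Prod.mk_sub_mk, rot, Prod.mk_add_mk, Prod.mk.injEq]; constructor <;> ring
    simp only [bsucc, e1, e2]
    split_ifs with hA hB
    · rw [e1] at hA
      exact ⟨hA, h2, plusAdj_mk (by omega)⟩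
    · rw [e1] at hA; rw [e2] at hB
      exact ⟨hB, hA, plusAdj_mk (by omega)⟩
    · rw [e1] at hA; rw [e2] at hB
      exact ⟨h1, hB, plusAdj_mk (by omega)⟩
  · -- sigma = (0,1)
    have e1 : ((d1, d2 + 1) : Site) + rot (((d1, d2 + 1) : Site) - ((d1, d2) : Site)) = ((d1 - 1, d2 + 1) : Site) := by simp only [Prod.mk_sub_mk, rot, Prod.mk_add_mk, Prod.mk.injEq]; constructor <;> ring
    have e2 : ((d1, d2) : Site) + rot (((d1, d2 + 1) : Site) - ((d1, d2) : Site)) = ((d1 - 1, d2) : Site) := by simp only [Prod.mk_sub_mk, rot, Prod.mk_add_mk, Prod.mk.injEq]; constructor <;> ring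
    simp only [bsucc, e1, e2]
    split_ifs with hA hB
    · rw [e1] at hA
      exact ⟨hA, h2, plusAdj_mk (by omega)⟩
    · rw [e1] at hA; rw [e2] at hB
      exact ⟨hB, hA, plusAdj_mk (by omega)⟩
    · rw [e1] at hA; rw [e2] at hB
      exact ⟨h1, hB, plusAdj_mk (by omega)⟩
  · -- sigma = (0,-1)
    have e1 : ((d1, d2 - 1) : Site) + rot (((d1, d2 - 1) : Site) - ((d1, d2) : Site)) = ((d1 + 1, d2 - 1) : Site) := by simp only [Prod.mk_sub_mk, rot, Prod.mk_add_mk, Prod.mk.injEq]; constructor <;> ring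
    have e2 : ((d1, d2) : Site) + rot (((d1, d2 - 1) : Site) - ((d1, d2) : Site)) = ((d1 + 1, d2) : Site) := by simp only [Prod.mk_sub_mk, rot, Prod.mk_add_mk, Prod.mk.injEq]; constructor <;> ring
    simp only [bsucc, e1, e2]
    split_ifs with hA hB
    · rw [e1] at hA
      exact ⟨hA, h2, plusAdj_mk (by omega)⟩
    · rw [e1] at hA; rw [e2] at hB
      exact ⟨hB, hA, plusAdj_mk (by omega)⟩
    · rw [e1] at hA; rw [e2] at hB
      exact ⟨h1, hB, plusAdj_mk (by omega)⟩

lemma bpred_bsucc {D : Set Site} {e : Site × Site} (he : e ∈ BE D) : bpred D (bsucc D e) = e := by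
  obtain ⟨h1, h2, h3⟩ := he
  rcases e with ⟨⟨d1, d2⟩, o⟩
  dsimp only at h1 h2 h3
  rcases sigma_cases h3 with rfl | rfl | rfl | rfl
  · -- sigma = (1,0)
    have e1 : ((d1 + 1, d2) : Site) + rot (((d1 + 1, d2) : Site) - ((d1, d2) : Site)) = ((d1 + 1, d2 + 1) : Site) := by simp only [Prod.mk_sub_mk, rot, Prod.mk_add_mk, Prod.mk.injEq]; constructor <;> ring
    have e2 : ((d1, d2) : Site) + rot (((d1 + 1, d2) : Site) - ((d1, d2) : Site)) = ((d1, d2 + 1) : Site) := by simp only [Prod.mk_sub_mk, rot, Prod.mk_add_mk, Prod.mk.injEq]; constructor <;> ring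
    simp only [bsucc, e1, e2]
    split_ifs with hA hB
    · rw [e1] at hA
      have f1 : ((d1 + 1, d2) : Site) - rot (((d1 + 1, d2) : Site) - ((d1 + 1, d2 + 1) : Site)) = ((d1, d2) : Site) := by simp only [Prod.mk_sub_mk, rot, Prod.mk.injEq]; constructor <;> ring
      simp only [bpred]
      split_ifs with p1
      · rw [f1]
      all_goals rw [f1] at p1
      all_goals exact absurd h1 p1
    · rw [e1] at hA; rw [e2] at hB
      have g1 : ((d1 + 1, d2 + 1) : Site) - rot (((d1 + 1, d2 + 1) : Site) - ((d1, d2 + 1) : Site)) = ((d1 + 1, d2) : Site) := by simp only [Prod.mk_sub_mk, rot, Prod.mk.injEq]; constructor <;> ring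
      have g2 : ((d1, d2 + 1) : Site) - rot (((d1 + 1, d2 + 1) : Site) - ((d1, d2 + 1) : Site)) = ((d1, d2) : Site) := by simp only [Prod.mk_sub_mk, rot, Prod.mk.injEq]; constructor <;> ring
      simp only [bpred]
      split_ifs with p1 p2
      · rw [g1] at p1; exact absurd p1 h2
      · rw [g1, g2]
      · rw [g2] at p2; exact absurd h1 p2
    · rw [e1] at hA; rw [e2] at hB
      have k1 : ((d1, d2 + 1) : Site) - rot (((d1, d2 + 1) : Site) - ((d1, d2) : Site)) = ((d1 + 1, d2 + 1) : Site) := by simp only [Prod.mk_sub_mk, rot, Prod.mk.injEq]; constructor <;> ring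
      have k2 : ((d1, d2) : Site) - rot (((d1, d2 + 1) : Site) - ((d1, d2) : Site)) = ((d1 + 1, d2) : Site) := by simp only [Prod.mk_sub_mk, rot, Prod.mk.injEq]; constructor <;> ring
      simp only [bpred]
      split_ifs with p1 p2
      · rw [k1] at p1; exact absurd p1 hA
      · rw [k2] at p2; exact absurd p2 h2
      · rw [k2]
  · -- sigma = (-1,0)
    have e1 : ((d1 - 1, d2) : Site) + rot (((d1 - 1, d2) : Site) - ((d1, d2) : Site)) = ((d1 - 1, d2 - 1) : Site) := by simp only [Prod.mk_sub_mk, rot, Prod.mk_add_mk, Prod.mk.injEq]; constructor <;> ring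
    have e2 : ((d1, d2) : Site) + rot (((d1 - 1, d2) : Site) - ((d1, d2) : Site)) = ((d1, d2 - 1) : Site) := by simp only [Prod.mk_sub_mk, rot, Prod.mk_add_mk, Prod.mk.injEq]; constructor <;> ring
    simp only [bsucc, e1, e2]
    split_ifs with hA hB
    · rw [e1] at hA
      have f1 : ((d1 - 1, d2) : Site) - rot (((d1 - 1, d2) : Site) - ((d1 - 1, d2 - 1) : Site)) = ((d1, d2) : Site) := by simp only [Prod.mk_sub_mk, rot, Prod.mk.injEq]; constructor <;> ring
      simp only [bpred]
      split_ifs with p1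
      · rw [f1]
      all_goals rw [f1] at p1
      all_goals exact absurd h1 p1
    · rw [e1] at hA; rw [e2] at hB
      have g1 : ((d1 - 1, d2 - 1) : Site) - rot (((d1 - 1, d2 - 1) : Site) - ((d1, d2 - 1) : Site)) = ((d1 - 1, d2) : Site) := by simp only [Prod.mk_sub_mk, rot, Prod.mk.injEq]; constructor <;> ring
      have g2 : ((d1, d2 - 1) : Site) - rot (((d1 - 1, d2 - 1) : Site) - ((d1, d2 - 1) : Site)) = ((d1, d2) : Site) := by simp only [Prod.mk_sub_mk, rot, Prod.mk.injEq]; constructor <;> ring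
      simp only [bpred]
      split_ifs with p1 p2
      · rw [g1] at p1; exact absurd p1 h2
      · rw [g1, g2]
      · rw [g2] at p2; exact absurd h1 p2
    · rw [e1] at hA; rw [e2] at hB
      have k1 : ((d1, d2 - 1) : Site) - rot (((d1, d2 - 1) : Site) - ((d1, d2) : Site)) = ((d1 - 1, d2 - 1) : Site) := by simp only [Prod.mk_sub_mk, rot, Prod.mk.injEq]; constructor <;> ring
      have k2 : ((d1, d2) : Site) - rot (((d1, d2 - 1) : Site) - ((d1, d2) : Site)) = ((d1 - 1, d2) : Site) := by simp only [Prod.mk_sub_mk, rot, Prod.mk.injEq]; constructor <;> ring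
      simp only [bpred]
      split_ifs with p1 p2
      · rw [k1] at p1; exact absurd p1 hA
      · rw [k2] at p2; exact absurd p2 h2
      · rw [k2]
  · -- sigma = (0,1)
    have e1 : ((d1, d2 + 1) : Site) + rot (((d1, d2 + 1) : Site) - ((d1, d2) : Site)) = ((d1 - 1, d2 + 1) : Site) := by simp only [Prod.mk_sub_mk, rot, Prod.mk_add_mk, Prod.mk.injEq]; constructor <;> ring
    have e2 : ((d1, d2) : Site) + rot (((d1, d2 + 1) : Site) - ((d1, d2) : Site)) = ((d1 - 1, d2) : Site) := by simp only [Prod.mk_sub_mk, rot, Prod.mk_add_mk, Prod.mk.injEq]; constructor <;> ring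
    simp only [bsucc, e1, e2]
    split_ifs with hA hB
    · rw [e1] at hA
      have f1 : ((d1, d2 + 1) : Site) - rot (((d1, d2 + 1) : Site) - ((d1 - 1, d2 + 1) : Site)) = ((d1, d2) : Site) := by simp only [Prod.mk_sub_mk, rot, Prod.mk.injEq]; constructor <;> ring
      simp only [bpred]
      split_ifs with p1
      · rw [f1]
      all_goals rw [f1] at p1
      all_goals exact absurd h1 p1
    · rw [e1] at hA; rw [e2] at hB
      have g1 : ((d1 - 1, d2 + 1) : Site) - rot (((d1 - 1, d2 + 1) : Site) - ((d1 - 1, d2) : Site)) = ((d1, d2 + 1) : Site) := by simp only [Prod.mk_sub_mk, rot, Prod.mk.injEq]; constructor <;> ring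
      have g2 : ((d1 - 1, d2) : Site) - rot (((d1 - 1, d2 + 1) : Site) - ((d1 - 1, d2) : Site)) = ((d1, d2) : Site) := by simp only [Prod.mk_sub_mk, rot, Prod.mk.injEq]; constructor <;> ring
      simp only [bpred]
      split_ifs with p1 p2
      · rw [g1] at p1; exact absurd p1 h2
      · rw [g1, g2]
      · rw [g2] at p2; exact absurd h1 p2
    · rw [e1] at hA; rw [e2] at hB
      have k1 : ((d1 - 1, d2) : Site) - rot (((d1 - 1, d2) : Site) - ((d1, d2) : Site)) = ((d1 - 1, d2 + 1) : Site) := by simp only [Prod.mk_sub_mk, rot, Prod.mk.injEq]; constructor <;> ring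
      have k2 : ((d1, d2) : Site) - rot (((d1 - 1, d2) : Site) - ((d1, d2) : Site)) = ((d1, d2 + 1) : Site) := by simp only [Prod.mk_sub_mk, rot, Prod.mk.injEq]; constructor <;> ring
      simp only [bpred]
      split_ifs with p1 p2
      · rw [k1] at p1; exact absurd p1 hA
      · rw [k2] at p2; exact absurd p2 h2
      · rw [k2]
  · -- sigma = (0,-1)
    have e1 : ((d1, d2 - 1) : Site) + rot (((d1, d2 - 1) : Site) - ((d1, d2) : Site)) = ((d1 + 1, d2 - 1) : Site) := by simp only [Prod.mk_sub_mk, rot, Prod.mk_add_mk, Prod.mk.injEq]; constructor <;> ring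
    have e2 : ((d1, d2) : Site) + rot (((d1, d2 - 1) : Site) - ((d1, d2) : Site)) = ((d1 + 1, d2) : Site) := by simp only [Prod.mk_sub_mk, rot, Prod.mk_add_mk, Prod.mk.injEq]; constructor <;> ring
    simp only [bsucc, e1, e2]
    split_ifs with hA hB
    · rw [e1] at hA
      have f1 : ((d1, d2 - 1) : Site) - rot (((d1, d2 - 1) : Site) - ((d1 + 1, d2 - 1) : Site)) = ((d1, d2) : Site) := by simp only [Prod.mk_sub_mk, rot, Prod.mk.injEq]; constructor <;> ring
      simp only [bpred]
      split_ifs with p1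
      · rw [f1]
      all_goals rw [f1] at p1
      all_goals exact absurd h1 p1
    · rw [e1] at hA; rw [e2] at hB
      have g1 : ((d1 + 1, d2 - 1) : Site) - rot (((d1 + 1, d2 - 1) : Site) - ((d1 + 1, d2) : Site)) = ((d1, d2 - 1) : Site) := by simp only [Prod.mk_sub_mk, rot, Prod.mk.injEq]; constructor <;> ring
      have g2 : ((d1 + 1, d2) : Site) - rot (((d1 + 1, d2 - 1) : Site) - ((d1 + 1, d2) : Site)) = ((d1, d2) : Site) := by simp only [Prod.mk_sub_mk, rot, Prod.mk.injEq]; constructor <;> ring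
      simp only [bpred]
      split_ifs with p1 p2
      · rw [g1] at p1; exact absurd p1 h2
      · rw [g1, g2]
      · rw [g2] at p2; exact absurd h1 p2
    · rw [e1] at hA; rw [e2] at hB
      have k1 : ((d1 + 1, d2) : Site) - rot (((d1 + 1, d2) : Site) - ((d1, d2) : Site)) = ((d1 + 1, d2 - 1) : Site) := by simp only [Prod.mk_sub_mk, rot, Prod.mk.injEq]; constructor <;> ring
      have k2 : ((d1, d2) : Site) - rot (((d1 + 1, d2) : Site) - ((d1, d2) : Site)) = ((d1, d2 - 1) : Site) := by simp only [Prod.mk_sub_mk, rot, Prod.mk.injEq]; constructor <;> ring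
      simp only [bpred]
      split_ifs with p1 p2
      · rw [k1] at p1; exact absurd p1 hA
      · rw [k2] at p2; exact absurd p2 h2
      · rw [k2]

end S5

section S6

variable {D : Set Site}

lemma BE_finite (hD : D.Finite) : (BE D).Finite := by
  have hsub : BE D ⊆ D ×ˢ
      ((fun p : Site => (p.1 + 1, p.2)) '' D ∪ (fun p : Site => (p.1 - 1, p.2)) '' D ∪
       (fun p : Site => (p.1, p.2 + 1)) '' D ∪ (fun p : Site => (p.1, p.2 - 1)) '' D) := by
    rintro ⟨d, o⟩ ⟨h1, h2, h3⟩
    dsimp only at h1 h2 h3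
    refine Set.mem_prod.2 ⟨h1, ?_⟩
    show o ∈ _
    rcases sigma_cases h3 with rfl | rfl | rfl | rfl
    · exact Or.inl (Or.inl (Or.inl ⟨d, h1, rfl⟩))
    · exact Or.inl (Or.inl (Or.inr ⟨d, h1, rfl⟩))
    · exact Or.inl (Or.inr ⟨d, h1, rfl⟩)
    · exact Or.inr ⟨d, h1, rfl⟩
  exact Set.Finite.subset (hD.prod (((hD.image _).union (hD.image _)).union (hD.image _) |>.union (hD.image _))) hsub

lemma iter_mem {e : Site × Site} (he : e ∈ BE D) (n : ℕ) : (bsucc D)^[n] e ∈ BE D := by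
  induction n with
  | zero => exact he
  | succ n ih => rw [Function.iterate_succ_apply']; exact bsucc_mem ih

lemma iter_cancel {e : Site × Site} (he : e ∈ BE D) :
    ∀ i j, i ≤ j → (bsucc D)^[i] e = (bsucc D)^[j] e → (bsucc D)^[j - i] e = e := by
  intro i
  induction i with
  | zero => intro j _ h; simpa using h.symm
  | succ i ih =>
    intro j hij h
    cases j with
    | zero => omega
    | succ k =>
      rw [Function.iterate_succ_apply', Function.iterate_succ_apply'] at h
      have h' : (bsucc D)^[i] e = (bsucc D)^[k] e := by
        have e1 := bpred_bsucc (iter_mem he i)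
        have e2 := bpred_bsucc (iter_mem he k)
        rw [← e1, ← e2, h]
      have := ih k (by omega) h'
      simpa [Nat.succ_sub_succ] using this

lemma exists_period (hD : D.Finite) {e : Site × Site} (he : e ∈ BE D) :
    ∃ m, 0 < m ∧ (bsucc D)^[m] e = e := by
  obtain ⟨i, -, j, -, hij, heq⟩ :=
    Set.infinite_univ.exists_ne_map_eq_of_mapsTo
      (f := fun n : ℕ => (bsucc D)^[n] e) (fun n _ => iter_mem he n) (BE_finite hD)
  rcases lt_or_ge i j with h | h
  · exact ⟨j - i, by omega, iter_cancel he i j (by omega) heq⟩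
  · have : j < i := by omega
    exact ⟨i - j, by omega, iter_cancel he j i (by omega) heq.symm⟩

lemma iter_mul_period {e : Site × Site} {m : ℕ} (hm : (bsucc D)^[m] e = e) :
    ∀ q r, (bsucc D)^[q * m + r] e = (bsucc D)^[r] e := by
  intro q
  induction q with
  | zero => intro r; simp
  | succ q ih =>
    intro r
    have : (q + 1) * m + r = (q * m + r) + m := by ring
    rw [this, Function.iterate_add_apply, hm]
    exact ih r

noncomputable def OrbF (D : Set Site) (e : Site × Site) (m : ℕ) : Finset (Site × Site) :=
  (Finset.range m).image (fun i => (bsucc D)^[i] e)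

lemma orb_injOn {e : Site × Site} (he : e ∈ BE D) {m : ℕ} (hm0 : 0 < m)
    (hm : (bsucc D)^[m] e = e) (hmin : ∀ k, 0 < k → k < m → (bsucc D)^[k] e ≠ e) :
    ∀ i < m, ∀ j < m, (bsucc D)^[i] e = (bsucc D)^[j] e → i = j := by
  have key : ∀ i j, i ≤ j → j < m → (bsucc D)^[i] e = (bsucc D)^[j] e → i = j := by
    intro i j hij hjm h
    by_contra hne
    have h1 : 0 < j - i := by omega
    exact hmin (j - i) h1 (by omega) (iter_cancel he i j hij h)
  intro i hi j hj h
  rcases le_or_gt i j with hle | hlt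
  · exact key i j hle hj h
  · exact (key j i (by omega) hi h.symm).symm

lemma mem_OrbF {e : Site × Site} (he : e ∈ BE D) {m : ℕ} (hm0 : 0 < m)
    (hm : (bsucc D)^[m] e = e) {x : Site × Site} :
    x ∈ OrbF D e m ↔ ∃ n, (bsucc D)^[n] e = x := by
  constructor
  · rintro hx
    obtain ⟨i, hi, rfl⟩ := Finset.mem_image.1 hx
    exact ⟨i, rfl⟩
  · rintro ⟨n, rfl⟩
    have : (bsucc D)^[n] e = (bsucc D)^[n % m] e := by
      conv_lhs => rw [show n = (n / m) * m + n % m by rw [Nat.mul_comm]; exact (Nat.div_add_mod n m).symm]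
      exact iter_mul_period hm _ _
    rw [this]
    exact Finset.mem_image.2 ⟨n % m, Finset.mem_range.2 (Nat.mod_lt _ hm0), rfl⟩

lemma OrbF_succ_closed {e : Site × Site} (he : e ∈ BE D) {m : ℕ} (hm0 : 0 < m)
    (hm : (bsucc D)^[m] e = e) {x : Site × Site} (hx : x ∈ OrbF D e m) :
    bsucc D x ∈ OrbF D e m := by
  rw [mem_OrbF he hm0 hm] at hx ⊢
  obtain ⟨n, rfl⟩ := hx
  exact ⟨n + 1, Function.iterate_succ_apply' _ _ _⟩

lemma OrbF_pred_closed {e : Site × Site} (he : e ∈ BE D) {m : ℕ} (hm0 : 0 < m)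
    (hm : (bsucc D)^[m] e = e) {x : Site × Site} (hx : x ∈ OrbF D e m) :
    bpred D x ∈ OrbF D e m := by
  rw [mem_OrbF he hm0 hm] at hx ⊢
  obtain ⟨n, rfl⟩ := hx
  refine ⟨n + (m - 1), ?_⟩
  have : n + (m - 1) + 1 = n + m := by omega
  have h2 : (bsucc D)^[n + (m - 1) + 1] e = bsucc D ((bsucc D)^[n + (m-1)] e) :=
    Function.iterate_succ_apply' _ _ _
  have h3 : (bsucc D)^[n + m] e = (bsucc D)^[n] e := by
    rw [Function.iterate_add_apply, hm]
  have h4 : bsucc D ((bsucc D)^[n + (m-1)] e) = (bsucc D)^[n] e := by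
    rw [← h2, this, h3]
  have h5 : bpred D ((bsucc D)^[n] e) = (bsucc D)^[n + (m - 1)] e := by
    rw [← h4]
    exact bpred_bsucc (iter_mem he _)
  exact h5.symm

lemma orbit_extract (hD : D.Finite) (κ : Site × Site → ℤ) :
    ∀ (n : ℕ) (s : Finset (Site × Site)), s.card ≤ n → (↑s ⊆ BE D) →
    (∀ f ∈ s, bsucc D f ∈ s) → (∑ f ∈ s, κ f) ≠ 0 →
    ∃ e ∈ BE D, ∃ m, 0 < m ∧ (bsucc D)^[m] e = e ∧
      (∀ k, 0 < k → k < m → (bsucc D)^[k] e ≠ e) ∧ κ e ≠ 0 ∧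
      (∑ i ∈ Finset.range m, κ ((bsucc D)^[i] e)) ≠ 0 := by
  intro n
  induction n with
  | zero =>
    intro s hc hsub hcl hsum
    rw [Finset.card_eq_zero.1 (Nat.le_zero.1 hc)] at hsum
    simp at hsum
  | succ n ih =>
    intro s hc hsub hcl hsum
    have hsne : s.Nonempty := by
      rcases Finset.eq_empty_or_nonempty s with rfl | h
      · simp at hsum
      · exact h
    obtain ⟨e₀, he₀s⟩ := hsne
    have he₀ : e₀ ∈ BE D := hsub he₀s
    obtain ⟨m₁, hm₁0, hm₁⟩ := exists_period hD he₀
    classical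
    have hPex : ∃ m, 0 < m ∧ (bsucc D)^[m] e₀ = e₀ := ⟨m₁, hm₁0, hm₁⟩
    set m := Nat.find hPex with hmdef
    obtain ⟨hm0, hm⟩ := Nat.find_spec hPex
    have hmin : ∀ k, 0 < k → k < m → (bsucc D)^[k] e₀ ≠ e₀ := by
      intro k hk0 hkm hke
      exact Nat.find_min hPex hkm ⟨hk0, hke⟩
    have hOf_sub : OrbF D e₀ m ⊆ s := by
      intro x hx
      rw [mem_OrbF he₀ hm0 hm] at hx
      obtain ⟨k, rfl⟩ := hx
      induction k with
      | zero => exact he₀s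
      | succ k ihk =>
        rw [Function.iterate_succ_apply']
        exact hcl _ ihk
    by_cases hOs : (∑ f ∈ OrbF D e₀ m, κ f) ≠ 0
    · -- pick a nonzero element in the orbit
      obtain ⟨e', he'Orb, hκ⟩ := Finset.exists_ne_zero_of_sum_ne_zero hOs
      rw [mem_OrbF he₀ hm0 hm] at he'Orb
      obtain ⟨i₀, he'⟩ := he'Orb
      -- we may take i₀ < m
      have he'' : (bsucc D)^[i₀ % m] e₀ = e' := by
        rw [← he']
        conv_rhs => rw [show i₀ = (i₀ / m) * m + i₀ % m by rw [Nat.mul_comm]; exact (Nat.div_add_mod i₀ m).symm]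
        exact (iter_mul_period hm _ _).symm
      set i := i₀ % m with hidef
      have him : i < m := Nat.mod_lt _ hm0
      have he'BE : e' ∈ BE D := he'' ▸ iter_mem he₀ i
      -- e' has period m
      have hper' : (bsucc D)^[m] e' = e' := by
        rw [← he'', ← Function.iterate_add_apply, Nat.add_comm, Function.iterate_add_apply, hm]
      have hPex' : ∃ m', 0 < m' ∧ (bsucc D)^[m'] e' = e' := ⟨m, hm0, hper'⟩
      set m' := Nat.find hPex' with hm'def
      obtain ⟨hm'0, hm'⟩ := Nat.find_spec hPex'
      have hmin' : ∀ k, 0 < k → k < m' → (bsucc D)^[k] e' ≠ e' := by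
        intro k hk0 hkm hke
        exact Nat.find_min hPex' hkm ⟨hk0, hke⟩
      -- orbits coincide
      have hOrbEq : OrbF D e' m' = OrbF D e₀ m := by
        apply Finset.ext
        intro x
        rw [mem_OrbF he'BE hm'0 hm', mem_OrbF he₀ hm0 hm]
        constructor
        · rintro ⟨k, rfl⟩
          exact ⟨k + i, by rw [Function.iterate_add_apply, he'']⟩
        · rintro ⟨k, rfl⟩
          have he₀e' : (bsucc D)^[m - i] e' = e₀ := by
            rw [← he'', ← Function.iterate_add_apply]
            have : m - i + i = m := by omega
            rw [this, hm]
          exact ⟨k + (m - i), by rw [Function.iterate_add_apply, he₀e']⟩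
      have hsum' : (∑ j ∈ Finset.range m', κ ((bsucc D)^[j] e')) ≠ 0 := by
        have : ∑ j ∈ Finset.range m', κ ((bsucc D)^[j] e') = ∑ f ∈ OrbF D e' m', κ f := by
          rw [OrbF, Finset.sum_image]
          intro a ha b hb hab
          exact orb_injOn he'BE hm'0 hm' hmin' a (Finset.mem_range.1 ha) b (Finset.mem_range.1 hb) hab
        rw [this, hOrbEq]
        exact hOs
      exact ⟨e', he'BE, m', hm'0, hm', hmin', hκ, hsum'⟩
    · push_neg at hOs
      -- remove the orbit and recurse
      set s' := s \ OrbF D e₀ m with hs'def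
      have hsum'' : (∑ f ∈ s', κ f) ≠ 0 := by
        have := Finset.sum_sdiff hOf_sub (f := κ)
        intro h0
        rw [hs'def] at h0
        rw [h0, hOs] at this
        simp at this
        exact hsum this.symm
      have hcard : s'.card ≤ n := by
        have h1 : (OrbF D e₀ m).Nonempty := ⟨e₀, by
          rw [mem_OrbF he₀ hm0 hm]; exact ⟨0, rfl⟩⟩
        have h2 := Finset.card_sdiff_of_subset hOf_sub
        rw [← hs'def] at h2
        have h3 := Finset.card_pos.2 h1
        have h4 := Finset.card_le_card hOf_sub
        omega
      have hsub' : ↑s' ⊆ BE D := fun x hx => hsub (Finset.mem_sdiff.1 hx).1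
      have hcl' : ∀ f ∈ s', bsucc D f ∈ s' := by
        intro f hf
        obtain ⟨hfs, hfn⟩ := Finset.mem_sdiff.1 hf
        refine Finset.mem_sdiff.2 ⟨hcl f hfs, fun hmem => ?_⟩
        have : f ∈ OrbF D e₀ m := by
          have := OrbF_pred_closed he₀ hm0 hm hmem
          rwa [bpred_bsucc (hsub hfs)] at this
        exact hfn this
      exact ih s' hcard hsub' hcl' hsum''

end S6

section S7

variable {D : Set Site}

open Classical in
noncomputable def out (D : Set Site) (e : Site × Site) : List Site :=
  if e.2 + rot (e.2 - e.1) ∈ D then []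
  else if e.1 + rot (e.2 - e.1) ∈ D then [e.2]
  else [e.2, e.2 + rot (e.2 - e.1)]

open Classical in
noncomputable def gb (D : Set Site) (x : Site) (e : Site × Site) : ℤ :=
  if e.2 + rot (e.2 - e.1) ∈ D then 0
  else if e.1 + rot (e.2 - e.1) ∈ D then cb x e.2 (e.2 + rot (e.2 - e.1))
  else cb x e.2 (e.2 + rot (e.2 - e.1)) + cb x (e.2 + rot (e.2 - e.1)) (e.1 + rot (e.2 - e.1))

def Bst (D : Set Site) : Set Site := {y | y ∉ D ∧ ∃ d ∈ D, starAdj y d}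

lemma bsucc_right {e : Site × Site} (hR : e.2 + rot (e.2 - e.1) ∈ D) :
    bsucc D e = (e.2 + rot (e.2 - e.1), e.2) := by
  simp only [bsucc]; rw [if_pos hR]

lemma bsucc_straight {e : Site × Site} (hR : e.2 + rot (e.2 - e.1) ∉ D)
    (hS : e.1 + rot (e.2 - e.1) ∈ D) :
    bsucc D e = (e.1 + rot (e.2 - e.1), e.2 + rot (e.2 - e.1)) := by
  simp only [bsucc]; rw [if_neg hR, if_pos hS]

lemma bsucc_left {e : Site × Site} (hR : e.2 + rot (e.2 - e.1) ∉ D)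
    (hS : e.1 + rot (e.2 - e.1) ∉ D) :
    bsucc D e = (e.1, e.1 + rot (e.2 - e.1)) := by
  simp only [bsucc]; rw [if_neg hR, if_neg hS]

lemma out_right {e : Site × Site} (hR : e.2 + rot (e.2 - e.1) ∈ D) : out D e = [] := by
  simp only [out]; rw [if_pos hR]

lemma out_straight {e : Site × Site} (hR : e.2 + rot (e.2 - e.1) ∉ D)
    (hS : e.1 + rot (e.2 - e.1) ∈ D) : out D e = [e.2] := by
  simp only [out]; rw [if_neg hR, if_pos hS]

lemma out_left {e : Site × Site} (hR : e.2 + rot (e.2 - e.1) ∉ D)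
    (hS : e.1 + rot (e.2 - e.1) ∉ D) : out D e = [e.2, e.2 + rot (e.2 - e.1)] := by
  simp only [out]; rw [if_neg hR, if_neg hS]

lemma gb_right {x : Site} {e : Site × Site} (hR : e.2 + rot (e.2 - e.1) ∈ D) :
    gb D x e = 0 := by
  simp only [gb]; rw [if_pos hR]

lemma gb_straight {x : Site} {e : Site × Site} (hR : e.2 + rot (e.2 - e.1) ∉ D)
    (hS : e.1 + rot (e.2 - e.1) ∈ D) : gb D x e = cb x e.2 (e.2 + rot (e.2 - e.1)) := by
  simp only [gb]; rw [if_neg hR, if_pos hS]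

lemma gb_left {x : Site} {e : Site × Site} (hR : e.2 + rot (e.2 - e.1) ∉ D)
    (hS : e.1 + rot (e.2 - e.1) ∉ D) :
    gb D x e = cb x e.2 (e.2 + rot (e.2 - e.1)) + cb x (e.2 + rot (e.2 - e.1)) (e.1 + rot (e.2 - e.1)) := by
  simp only [gb]; rw [if_neg hR, if_neg hS]

lemma starAdj_mk {a1 a2 b1 b2 : ℤ} (h0 : ¬(a1 = b1 ∧ a2 = b2))
    (hb : -1 ≤ a1 - b1 ∧ a1 - b1 ≤ 1 ∧ -1 ≤ a2 - b2 ∧ a2 - b2 ≤ 1) :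
    starAdj (a1, a2) (b1, b2) := by
  refine ⟨?_, ?_, ?_⟩
  · intro hc
    rw [Prod.mk.injEq] at hc
    exact h0 hc
  · rw [abs_le]; dsimp only; omega
  · rw [abs_le]; dsimp only; omega

lemma plusAdj_o_ot {d o : Site} (h3 : plusAdj d o) : plusAdj o (o + rot (o - d)) := by
  rcases d with ⟨d1, d2⟩
  rcases sigma_cases h3 with rfl | rfl | rfl | rfl
  · 
    have e1 : ((d1 + 1, d2) : Site) + rot (((d1 + 1, d2) : Site) - ((d1, d2) : Site)) = ((d1 + 1, d2 + 1) : Site) := by simp only [Prod.mk_sub_mk, rot, Prod.mk_add_mk, Prod.mk.injEq]; constructor <;> ring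
    rw [e1]
    exact plusAdj_mk (by omega)
  · 
    have e1 : ((d1 - 1, d2) : Site) + rot (((d1 - 1, d2) : Site) - ((d1, d2) : Site)) = ((d1 - 1, d2 - 1) : Site) := by simp only [Prod.mk_sub_mk, rot, Prod.mk_add_mk, Prod.mk.injEq]; constructor <;> ring
    rw [e1]
    exact plusAdj_mk (by omega)
  · 
    have e1 : ((d1, d2 + 1) : Site) + rot (((d1, d2 + 1) : Site) - ((d1, d2) : Site)) = ((d1 - 1, d2 + 1) : Site) := by simp only [Prod.mk_sub_mk, rot, Prod.mk_add_mk, Prod.mk.injEq]; constructor <;> ring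
    rw [e1]
    exact plusAdj_mk (by omega)
  · 
    have e1 : ((d1, d2 - 1) : Site) + rot (((d1, d2 - 1) : Site) - ((d1, d2) : Site)) = ((d1 + 1, d2 - 1) : Site) := by simp only [Prod.mk_sub_mk, rot, Prod.mk_add_mk, Prod.mk.injEq]; constructor <;> ring
    rw [e1]
    exact plusAdj_mk (by omega)

lemma plusAdj_ot_dt {d o : Site} (h3 : plusAdj d o) :
    plusAdj (o + rot (o - d)) (d + rot (o - d)) := by
  rcases d with ⟨d1, d2⟩
  rcases sigma_cases h3 with rfl | rfl | rfl | rfl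
  · 
    have e1 : ((d1 + 1, d2) : Site) + rot (((d1 + 1, d2) : Site) - ((d1, d2) : Site)) = ((d1 + 1, d2 + 1) : Site) := by simp only [Prod.mk_sub_mk, rot, Prod.mk_add_mk, Prod.mk.injEq]; constructor <;> ring
    have e2 : ((d1, d2) : Site) + rot (((d1 + 1, d2) : Site) - ((d1, d2) : Site)) = ((d1, d2 + 1) : Site) := by simp only [Prod.mk_sub_mk, rot, Prod.mk_add_mk, Prod.mk.injEq]; constructor <;> ring
    rw [e1, e2]
    exact plusAdj_mk (by omega)
  · 
    have e1 : ((d1 - 1, d2) : Site) + rot (((d1 - 1, d2) : Site) - ((d1, d2) : Site)) = ((d1 - 1, d2 - 1) : Site) := by simp only [Prod.mk_sub_mk, rot, Prod.mk_add_mk, Prod.mk.injEq]; constructor <;> ring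
    have e2 : ((d1, d2) : Site) + rot (((d1 - 1, d2) : Site) - ((d1, d2) : Site)) = ((d1, d2 - 1) : Site) := by simp only [Prod.mk_sub_mk, rot, Prod.mk_add_mk, Prod.mk.injEq]; constructor <;> ring
    rw [e1, e2]
    exact plusAdj_mk (by omega)
  · 
    have e1 : ((d1, d2 + 1) : Site) + rot (((d1, d2 + 1) : Site) - ((d1, d2) : Site)) = ((d1 - 1, d2 + 1) : Site) := by simp only [Prod.mk_sub_mk, rot, Prod.mk_add_mk, Prod.mk.injEq]; constructor <;> ring
    have e2 : ((d1, d2) : Site) + rot (((d1, d2 + 1) : Site) - ((d1, d2) : Site)) = ((d1 - 1, d2) : Site) := by simp only [Prod.mk_sub_mk, rot, Prod.mk_add_mk, Prod.mk.injEq]; constructor <;> ring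
    rw [e1, e2]
    exact plusAdj_mk (by omega)
  · 
    have e1 : ((d1, d2 - 1) : Site) + rot (((d1, d2 - 1) : Site) - ((d1, d2) : Site)) = ((d1 + 1, d2 - 1) : Site) := by simp only [Prod.mk_sub_mk, rot, Prod.mk_add_mk, Prod.mk.injEq]; constructor <;> ring
    have e2 : ((d1, d2) : Site) + rot (((d1, d2 - 1) : Site) - ((d1, d2) : Site)) = ((d1 + 1, d2) : Site) := by simp only [Prod.mk_sub_mk, rot, Prod.mk_add_mk, Prod.mk.injEq]; constructor <;> ring
    rw [e1, e2]
    exact plusAdj_mk (by omega)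

lemma starAdj_ot_d {d o : Site} (h3 : plusAdj d o) : starAdj (o + rot (o - d)) d := by
  rcases d with ⟨d1, d2⟩
  rcases sigma_cases h3 with rfl | rfl | rfl | rfl
  · 
    have e1 : ((d1 + 1, d2) : Site) + rot (((d1 + 1, d2) : Site) - ((d1, d2) : Site)) = ((d1 + 1, d2 + 1) : Site) := by simp only [Prod.mk_sub_mk, rot, Prod.mk_add_mk, Prod.mk.injEq]; constructor <;> ring
    rw [e1]
    exact starAdj_mk (by omega) (by omega)
  · 
    have e1 : ((d1 - 1, d2) : Site) + rot (((d1 - 1, d2) : Site) - ((d1, d2) : Site)) = ((d1 - 1, d2 - 1) : Site) := by simp only [Prod.mk_sub_mk, rot, Prod.mk_add_mk, Prod.mk.injEq]; constructor <;> ring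
    rw [e1]
    exact starAdj_mk (by omega) (by omega)
  · 
    have e1 : ((d1, d2 + 1) : Site) + rot (((d1, d2 + 1) : Site) - ((d1, d2) : Site)) = ((d1 - 1, d2 + 1) : Site) := by simp only [Prod.mk_sub_mk, rot, Prod.mk_add_mk, Prod.mk.injEq]; constructor <;> ring
    rw [e1]
    exact starAdj_mk (by omega) (by omega)
  · 
    have e1 : ((d1, d2 - 1) : Site) + rot (((d1, d2 - 1) : Site) - ((d1, d2) : Site)) = ((d1 + 1, d2 - 1) : Site) := by simp only [Prod.mk_sub_mk, rot, Prod.mk_add_mk, Prod.mk.injEq]; constructor <;> ring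
    rw [e1]
    exact starAdj_mk (by omega) (by omega)

noncomputable def walkF (D : Set Site) (e : Site × Site) : ℕ → List Site
  | 0 => []
  | (i+1) => walkF D e i ++ out D ((bsucc D)^[i] e)

lemma getLast?_some {W : List Site} (h : W ≠ []) : W.getLast? = some (W.getLastD (0,0)) := by
  cases W with
  | nil => simp at h
  | cons a t =>
    rw [List.getLastD_eq_getLast?]
    cases h' : (a :: t).getLast? with
    | none => simp at h'
    | some b => rfl

lemma getLastD_snoc (l : List Site) (y a : Site) : (l ++ [y]).getLastD a = y := by
  induction l generalizing a with
  | nil => rfl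
  | cons c s ih => rw [List.cons_append, List.getLastD_cons]; exact ih c

lemma pSum_snoc (g : Site → Site → ℤ) {l : List Site} (hl : l ≠ []) (y a : Site) :
    pSum g (l ++ [y]) = pSum g l + g (l.getLastD a) y := by
  induction l with
  | nil => simp at hl
  | cons c s ih =>
    cases s with
    | nil => simp [pSum]
    | cons b t =>
      rw [List.cons_append]
      have : pSum g (c :: ((b :: t) ++ [y])) = g c b + pSum g ((b :: t) ++ [y]) := rfl
      rw [this, ih (by simp)]
      have : pSum g (c :: b :: t) = g c b + pSum g (b :: t) := rfl
      rw [this]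
      simp only [List.getLastD_cons]
      ring

lemma chain'_snoc {l : List Site} (hl : l ≠ []) (hc : l.Chain' plusAdj) {y : Site}
    (hy : plusAdj (l.getLastD (0,0)) y) : (l ++ [y]).Chain' plusAdj := by
  rw [List.Chain', List.isChain_append]
  refine ⟨hc, List.isChain_singleton _, fun p hp q hq => ?_⟩
  rw [getLast?_some hl] at hp
  simp only [Option.mem_def, Option.some.injEq] at hp hq
  subst hp
  simp only [List.head?_cons, Option.some.injEq] at hq
  subst hq
  exact hy

lemma walk_spec {e : Site × Site} (he : e ∈ BE D)
    (hnr : e.2 + rot (e.2 - e.1) ∉ D) (x : Site) :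
    ∀ i, 1 ≤ i →
      walkF D e i ≠ [] ∧ (walkF D e i).headI = e.2 ∧ (walkF D e i).Chain' plusAdj ∧
      (∀ z ∈ walkF D e i, z ∈ Bst D) ∧
      plusAdj ((walkF D e i).getLastD (0,0)) (((bsucc D)^[i] e).2) ∧
      pSum (cb x) (walkF D e i) + cb x ((walkF D e i).getLastD (0,0)) (((bsucc D)^[i] e).2)
        = ∑ j ∈ Finset.range i, gb D x ((bsucc D)^[j] e) := by
  intro i
  induction i with
  | zero => omega
  | succ i ih =>
    intro _
    rcases Nat.eq_or_lt_of_le (by omega : 1 ≤ i + 1) with h1 | h1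
    · -- base case : i + 1 = 1, i = 0
      have hi0 : i = 0 := by omega
      subst hi0
      obtain ⟨hd1, hd2, hd3⟩ := he
      have hW : walkF D e 1 = out D e := by
        show walkF D e 0 ++ out D ((bsucc D)^[0] e) = out D e
        simp [walkF]
      by_cases hS : e.1 + rot (e.2 - e.1) ∈ D
      · -- straight
        rw [hW, out_straight hnr hS]
        have hb : (bsucc D)^[1] e = (e.1 + rot (e.2 - e.1), e.2 + rot (e.2 - e.1)) := by
          simp [bsucc_straight hnr hS]
        rw [hb]
        refine ⟨by simp, rfl, List.isChain_singleton _, ?_, ?_, ?_⟩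
        · intro z hz
          simp only [List.mem_singleton] at hz
          subst hz
          exact ⟨hd2, e.1, hd1, starAdj_symm (plusAdj_to_star hd3)⟩
        · dsimp only
          exact plusAdj_o_ot hd3
        · dsimp only
          rw [Finset.sum_range_one, Function.iterate_zero_apply]
          have hgl : ([e.2] : List Site).getLastD (0,0) = e.2 := rfl
          have h0 : pSum (cb x) [e.2] = 0 := rfl
          rw [hgl, h0, gb_straight hnr hS]
          ring
      · -- left
        rw [hW, out_left hnr hS]
        have hb : (bsucc D)^[1] e = (e.1, e.1 + rot (e.2 - e.1)) := by
          simp [bsucc_left hnr hS]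
        rw [hb]
        refine ⟨by simp, rfl, ?_, ?_, ?_, ?_⟩
        · exact List.isChain_pair.2 (plusAdj_o_ot hd3)
        · intro z hz
          simp only [List.mem_cons, List.mem_singleton] at hz
          rcases hz with rfl | rfl | h
          · exact ⟨hd2, e.1, hd1, starAdj_symm (plusAdj_to_star hd3)⟩
          · exact ⟨hnr, e.1, hd1, starAdj_ot_d hd3⟩
          · simp at h
        · dsimp only
          have : ([e.2, e.2 + rot (e.2 - e.1)] : List Site).getLastD (0,0)
              = e.2 + rot (e.2 - e.1) := rfl
          rw [this]
          exact plusAdj_ot_dt hd3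
        · dsimp only
          rw [Finset.sum_range_one, Function.iterate_zero_apply]
          have hgl : ([e.2, e.2 + rot (e.2 - e.1)] : List Site).getLastD (0,0)
              = e.2 + rot (e.2 - e.1) := rfl
          have h3 : pSum (cb x) [e.2, e.2 + rot (e.2 - e.1)]
              = cb x e.2 (e.2 + rot (e.2 - e.1)) + 0 := rfl
          rw [hgl, h3, gb_left hnr hS]
          ring
    · -- inductive step : 1 ≤ i
      obtain ⟨hne, hhead, hchain, hmem, hlast, hsum⟩ := ih (by omega)
      set W := walkF D e i with hWdef
      set f := (bsucc D)^[i] e with hfdef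
      have hfBE : f ∈ BE D := iter_mem he i
      obtain ⟨hf1, hf2, hf3⟩ := hfBE
      have hW1 : walkF D e (i + 1) = W ++ out D f := rfl
      have hiter : (bsucc D)^[i+1] e = bsucc D f := Function.iterate_succ_apply' _ _ _
      have hsum_succ : ∑ j ∈ Finset.range (i+1), gb D x ((bsucc D)^[j] e)
          = (∑ j ∈ Finset.range i, gb D x ((bsucc D)^[j] e)) + gb D x f := by
        rw [Finset.sum_range_succ]
      by_cases hR : f.2 + rot (f.2 - f.1) ∈ D
      · -- right turn : no emission
        rw [hW1, out_right hR, List.append_nil, hiter, bsucc_right hR]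
        rw [hsum_succ, gb_right hR]
        exact ⟨hne, hhead, hchain, hmem, by dsimp only; exact hlast, by dsimp only; omega⟩
      · by_cases hS : f.1 + rot (f.2 - f.1) ∈ D
        · -- straight
          rw [hW1, out_straight hR hS, hiter, bsucc_straight hR hS]
          have hgl : ((W ++ [f.2]).getLastD (0,0)) = f.2 := getLastD_snoc _ _ _
          refine ⟨by simp [hne], by rw [headI_append _ hne]; exact hhead,
            chain'_snoc hne hchain hlast, ?_, ?_, ?_⟩
          · intro z hz
            rcases List.mem_append.1 hz with h | h
            · exact hmem z h
            · simp only [List.mem_singleton] at h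
              subst h
              exact ⟨hf2, f.1, hf1, starAdj_symm (plusAdj_to_star hf3)⟩
          · rw [hgl]
            dsimp only
            exact plusAdj_o_ot hf3
          · rw [hgl, pSum_snoc (cb x) hne f.2 (0,0), hsum_succ, gb_straight hR hS]
            dsimp only
            omega
        · -- left turn
          rw [hW1, out_left hR hS, hiter, bsucc_left hR hS]
          have hsplit : W ++ [f.2, f.2 + rot (f.2 - f.1)]
              = (W ++ [f.2]) ++ [f.2 + rot (f.2 - f.1)] := by simp
          have hgl1 : ((W ++ [f.2]).getLastD (0,0)) = f.2 := getLastD_snoc _ _ _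
          have hgl2 : (((W ++ [f.2]) ++ [f.2 + rot (f.2 - f.1)]).getLastD (0,0))
              = f.2 + rot (f.2 - f.1) := getLastD_snoc _ _ _
          have hchain1 : (W ++ [f.2]).Chain' plusAdj := chain'_snoc hne hchain hlast
          have hchain2 : ((W ++ [f.2]) ++ [f.2 + rot (f.2 - f.1)]).Chain' plusAdj := by
            refine chain'_snoc (by simp) hchain1 ?_
            rw [hgl1]
            exact plusAdj_o_ot hf3
          refine ⟨by simp, by rw [headI_append _ hne]; exact hhead, by rw [hsplit]; exact hchain2,
            ?_, ?_, ?_⟩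
          · intro z hz
            rcases List.mem_append.1 hz with h | h
            · exact hmem z h
            · simp only [List.mem_cons, List.mem_singleton] at h
              rcases h with rfl | rfl | h
              · exact ⟨hf2, f.1, hf1, starAdj_symm (plusAdj_to_star hf3)⟩
              · exact ⟨hR, f.1, hf1, starAdj_ot_d hf3⟩
              · simp at h
          · rw [hsplit, hgl2]
            dsimp only
            exact plusAdj_ot_dt hf3
          · rw [hsplit, hgl2, pSum_snoc (cb x) (by simp : W ++ [f.2] ≠ []) _ (0,0),
              pSum_snoc (cb x) hne f.2 (0,0), hgl1, hsum_succ, gb_left hR hS]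
            dsimp only
            omega

lemma walk_closed {e : Site × Site} (he : e ∈ BE D)
    (hnr : e.2 + rot (e.2 - e.1) ∉ D) {m : ℕ} (hm0 : 0 < m)
    (hm : (bsucc D)^[m] e = e) (x : Site) :
    CW (walkF D e m) ∧ (∀ z ∈ walkF D e m, z ∈ Bst D) ∧
      wd x (walkF D e m) = ∑ j ∈ Finset.range m, gb D x ((bsucc D)^[j] e) := by
  obtain ⟨hne, hhead, hchain, hmem, hlast, hsum⟩ := walk_spec he hnr x m (by omega)
  rw [hm] at hlast hsum
  have hcw : CW (walkF D e m) := by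
    refine ⟨hne, ?_⟩
    refine chain'_snoc hne hchain ?_
    rw [hhead]
    exact hlast
  refine ⟨hcw, hmem, ?_⟩
  unfold wd
  rw [pSum_snoc (cb x) hne _ (0,0), hhead, hsum]

end S7

section S8

variable {D : Set Site}

open Classical

lemma gb1 (x : Site) (d1 d2 : ℤ) (hd : ((d1, d2) : Site) ∈ D) :
    gb D x ((d1, d2), (d1 + 1, d2)) =
      if ((d1 + 1, d2 + 1) : Site) ∈ D then 0
      else if d2 = x.2 ∧ x.1 < d1 + 1 then 1 else 0 := by
  have e1 : ((d1 + 1, d2) : Site) + rot (((d1 + 1, d2) : Site) - ((d1, d2) : Site)) = (d1 + 1, d2 + 1) := by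
    simp only [Prod.mk_sub_mk, rot, Prod.mk_add_mk, Prod.mk.injEq]; constructor <;> ring
  have e2 : ((d1, d2) : Site) + rot (((d1 + 1, d2) : Site) - ((d1, d2) : Site)) = (d1, d2 + 1) := by
    simp only [Prod.mk_sub_mk, rot, Prod.mk_add_mk, Prod.mk.injEq]; constructor <;> ring
  simp only [gb]
  split_ifs <;> simp only [e1, e2] at * <;>
    first
      | rfl
      | tauto
      | (rcases x with ⟨X, Y⟩
         simp only [cb]
         try dsimp only
         split_ifs <;>
           first | rfl | omega | (simp only [true_and] at *; omega) | tauto)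
lemma gb2 (x : Site) (d1 d2 : ℤ) (hd : ((d1, d2) : Site) ∈ D) :
    gb D x ((d1, d2), (d1, d2 - 1)) =
      if ((d1 + 1, d2 - 1) : Site) ∈ D then 0
      else if ((d1 + 1, d2) : Site) ∈ D then 0
      else if d2 - 1 = x.2 ∧ x.1 < d1 + 1 then 1 else 0 := by
  have e1 : ((d1, d2 - 1) : Site) + rot (((d1, d2 - 1) : Site) - ((d1, d2) : Site)) = (d1 + 1, d2 - 1) := by
    simp only [Prod.mk_sub_mk, rot, Prod.mk_add_mk, Prod.mk.injEq]; constructor <;> ring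
  have e2 : ((d1, d2) : Site) + rot (((d1, d2 - 1) : Site) - ((d1, d2) : Site)) = (d1 + 1, d2) := by
    simp only [Prod.mk_sub_mk, rot, Prod.mk_add_mk, Prod.mk.injEq]; constructor <;> ring
  simp only [gb]
  split_ifs <;> simp only [e1, e2] at * <;>
    first
      | rfl
      | tauto
      | (rcases x with ⟨X, Y⟩
         simp only [cb]
         try dsimp only
         split_ifs <;>
           first | rfl | omega | (simp only [true_and] at *; omega) | tauto)
lemma gb3 (x : Site) (d1 d2 : ℤ) (hd : ((d1, d2) : Site) ∈ D) :
    gb D x ((d1, d2), (d1 - 1, d2)) =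
      if ((d1 - 1, d2 - 1) : Site) ∈ D then 0
      else if d2 = x.2 + 1 ∧ x.1 < d1 - 1 then -1 else 0 := by
  have e1 : ((d1 - 1, d2) : Site) + rot (((d1 - 1, d2) : Site) - ((d1, d2) : Site)) = (d1 - 1, d2 - 1) := by
    simp only [Prod.mk_sub_mk, rot, Prod.mk_add_mk, Prod.mk.injEq]; constructor <;> ring
  have e2 : ((d1, d2) : Site) + rot (((d1 - 1, d2) : Site) - ((d1, d2) : Site)) = (d1, d2 - 1) := by
    simp only [Prod.mk_sub_mk, rot, Prod.mk_add_mk, Prod.mk.injEq]; constructor <;> ring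
  simp only [gb]
  split_ifs <;> simp only [e1, e2] at * <;>
    first
      | rfl
      | tauto
      | (rcases x with ⟨X, Y⟩
         simp only [cb]
         try dsimp only
         split_ifs <;>
           first | rfl | omega | (simp only [true_and] at *; omega) | tauto)
lemma gb4 (x : Site) (d1 d2 : ℤ) (hd : ((d1, d2) : Site) ∈ D) :
    gb D x ((d1, d2), (d1, d2 + 1)) =
      if ((d1 - 1, d2 + 1) : Site) ∈ D then 0
      else if ((d1 - 1, d2) : Site) ∈ D then 0
      else if d2 = x.2 ∧ x.1 < d1 - 1 then -1 else 0 := by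
  have e1 : ((d1, d2 + 1) : Site) + rot (((d1, d2 + 1) : Site) - ((d1, d2) : Site)) = (d1 - 1, d2 + 1) := by
    simp only [Prod.mk_sub_mk, rot, Prod.mk_add_mk, Prod.mk.injEq]; constructor <;> ring
  have e2 : ((d1, d2) : Site) + rot (((d1, d2 + 1) : Site) - ((d1, d2) : Site)) = (d1 - 1, d2) := by
    simp only [Prod.mk_sub_mk, rot, Prod.mk_add_mk, Prod.mk.injEq]; constructor <;> ring
  simp only [gb]
  split_ifs <;> simp only [e1, e2] at * <;>
    first
      | rfl
      | tauto
      | (rcases x with ⟨X, Y⟩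
         simp only [cb]
         try dsimp only
         split_ifs <;>
           first | rfl | omega | (simp only [true_and] at *; omega) | tauto)
end S8

section S9

variable {D : Set Site}

open Classical

def eU1 (Y a : ℤ) : Site × Site := ((a - 1, Y), (a, Y))
def eU2 (Y a : ℤ) : Site × Site := ((a - 1, Y + 1), (a - 1, Y))
def eD1 (Y a : ℤ) : Site × Site := ((a + 1, Y + 1), (a, Y + 1))
def eD2 (Y a : ℤ) : Site × Site := ((a + 1, Y), (a + 1, Y + 1))

noncomputable def contrib (D : Set Site) (x : Site) (e : Site × Site) (a : ℤ) : ℤ :=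
  (if e = eU1 x.2 a then gb D x e else 0) + (if e = eU2 x.2 a then gb D x e else 0)
  + (if e = eD1 x.2 a then gb D x e else 0) + (if e = eD2 x.2 a then gb D x e else 0)

lemma sum_pin (s : Finset ℤ) (c : ℤ) (P : Prop) [Decidable P] (v : ℤ) :
    (∑ a ∈ s, if a = c ∧ P then v else 0) = if c ∈ s ∧ P then v else 0 := by
  by_cases hP : P
  · simp only [hP, and_true]
    rw [Finset.sum_ite_eq' s c (fun _ => v)]
  · simp [hP]

lemma claimA (x : Site) (M : ℤ) (hM : ∀ p ∈ D, p.1 < M) :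
    ∀ e ∈ BE D, gb D x e = ∑ a ∈ Finset.Icc (x.1 + 1) M, contrib D x e a := by
  rintro ⟨⟨d1, d2⟩, o⟩ ⟨h1, h2, h3⟩
  dsimp only at h1 h2 h3
  have hdM : d1 < M := hM (d1, d2) h1
  rcases sigma_cases h3 with rfl | rfl | rfl | rfl
  · -- σ = (1,0) : only eU1 possible
    have hsum : ∀ a, contrib D x (((d1, d2), (d1 + 1, d2)) : Site × Site) a
        = if a = d1 + 1 ∧ d2 = x.2 then gb D x ((d1, d2), (d1 + 1, d2)) else 0 := by
      intro a
      unfold contrib eU1 eU2 eD1 eD2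
      have hc1 : ((((d1, d2), (d1 + 1, d2)) : Site × Site) = ((a - 1, x.2), (a, x.2)))
          ↔ (a = d1 + 1 ∧ d2 = x.2) := by simp only [Prod.mk.injEq]; omega
      have hc2 : ((((d1, d2), (d1 + 1, d2)) : Site × Site) = ((a - 1, x.2 + 1), (a - 1, x.2)))
          ↔ False := by simp only [Prod.mk.injEq, iff_false]; omega
      have hc3 : ((((d1, d2), (d1 + 1, d2)) : Site × Site) = ((a + 1, x.2 + 1), (a, x.2 + 1)))
          ↔ False := by simp only [Prod.mk.injEq, iff_false]; omega
      have hc4 : ((((d1, d2), (d1 + 1, d2)) : Site × Site) = ((a + 1, x.2), (a + 1, x.2 + 1)))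
          ↔ False := by simp only [Prod.mk.injEq, iff_false]; omega
      simp only [hc1, hc2, hc3, hc4, if_false, add_zero]
    rw [Finset.sum_congr rfl (fun a _ => hsum a), sum_pin]
    by_cases hin : d1 + 1 ∈ Finset.Icc (x.1 + 1) M ∧ d2 = x.2
    · rw [if_pos hin]
    · rw [if_neg hin, gb1 x d1 d2 h1, Finset.mem_Icc] at *
      split_ifs <;> omega
  · -- σ = (-1,0) : only eD1 possible
    have hsum : ∀ a, contrib D x (((d1, d2), (d1 - 1, d2)) : Site × Site) a
        = if a = d1 - 1 ∧ d2 = x.2 + 1 then gb D x ((d1, d2), (d1 - 1, d2)) else 0 := by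
      intro a
      unfold contrib eU1 eU2 eD1 eD2
      have hc1 : ((((d1, d2), (d1 - 1, d2)) : Site × Site) = ((a - 1, x.2), (a, x.2)))
          ↔ False := by simp only [Prod.mk.injEq, iff_false]; omega
      have hc2 : ((((d1, d2), (d1 - 1, d2)) : Site × Site) = ((a - 1, x.2 + 1), (a - 1, x.2)))
          ↔ False := by simp only [Prod.mk.injEq, iff_false]; omega
      have hc3 : ((((d1, d2), (d1 - 1, d2)) : Site × Site) = ((a + 1, x.2 + 1), (a, x.2 + 1)))
          ↔ (a = d1 - 1 ∧ d2 = x.2 + 1) := by simp only [Prod.mk.injEq]; omega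
      have hc4 : ((((d1, d2), (d1 - 1, d2)) : Site × Site) = ((a + 1, x.2), (a + 1, x.2 + 1)))
          ↔ False := by simp only [Prod.mk.injEq, iff_false]; omega
      simp only [hc1, hc2, hc3, hc4, if_false, add_zero, zero_add]
    rw [Finset.sum_congr rfl (fun a _ => hsum a), sum_pin]
    by_cases hin : d1 - 1 ∈ Finset.Icc (x.1 + 1) M ∧ d2 = x.2 + 1
    · rw [if_pos hin]
    · rw [if_neg hin, gb3 x d1 d2 h1, Finset.mem_Icc] at *
      split_ifs <;> omega
  · -- σ = (0,1) : only eD2 possible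
    have hsum : ∀ a, contrib D x (((d1, d2), (d1, d2 + 1)) : Site × Site) a
        = if a = d1 - 1 ∧ d2 = x.2 then gb D x ((d1, d2), (d1, d2 + 1)) else 0 := by
      intro a
      unfold contrib eU1 eU2 eD1 eD2
      have hc1 : ((((d1, d2), (d1, d2 + 1)) : Site × Site) = ((a - 1, x.2), (a, x.2)))
          ↔ False := by simp only [Prod.mk.injEq, iff_false]; omega
      have hc2 : ((((d1, d2), (d1, d2 + 1)) : Site × Site) = ((a - 1, x.2 + 1), (a - 1, x.2)))
          ↔ False := by simp only [Prod.mk.injEq, iff_false]; omega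
      have hc3 : ((((d1, d2), (d1, d2 + 1)) : Site × Site) = ((a + 1, x.2 + 1), (a, x.2 + 1)))
          ↔ False := by simp only [Prod.mk.injEq, iff_false]; omega
      have hc4 : ((((d1, d2), (d1, d2 + 1)) : Site × Site) = ((a + 1, x.2), (a + 1, x.2 + 1)))
          ↔ (a = d1 - 1 ∧ d2 = x.2) := by simp only [Prod.mk.injEq]; omega
      simp only [hc1, hc2, hc3, hc4, if_false, add_zero, zero_add]
    rw [Finset.sum_congr rfl (fun a _ => hsum a), sum_pin]
    by_cases hin : d1 - 1 ∈ Finset.Icc (x.1 + 1) M ∧ d2 = x.2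
    · rw [if_pos hin]
    · rw [if_neg hin, gb4 x d1 d2 h1, Finset.mem_Icc] at *
      split_ifs <;> omega
  · -- σ = (0,-1) : only eU2 possible
    have hsum : ∀ a, contrib D x (((d1, d2), (d1, d2 - 1)) : Site × Site) a
        = if a = d1 + 1 ∧ d2 = x.2 + 1 then gb D x ((d1, d2), (d1, d2 - 1)) else 0 := by
      intro a
      unfold contrib eU1 eU2 eD1 eD2
      have hc1 : ((((d1, d2), (d1, d2 - 1)) : Site × Site) = ((a - 1, x.2), (a, x.2)))
          ↔ False := by simp only [Prod.mk.injEq, iff_false]; omega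
      have hc2 : ((((d1, d2), (d1, d2 - 1)) : Site × Site) = ((a - 1, x.2 + 1), (a - 1, x.2)))
          ↔ (a = d1 + 1 ∧ d2 = x.2 + 1) := by simp only [Prod.mk.injEq]; omega
      have hc3 : ((((d1, d2), (d1, d2 - 1)) : Site × Site) = ((a + 1, x.2 + 1), (a, x.2 + 1)))
          ↔ False := by simp only [Prod.mk.injEq, iff_false]; omega
      have hc4 : ((((d1, d2), (d1, d2 - 1)) : Site × Site) = ((a + 1, x.2), (a + 1, x.2 + 1)))
          ↔ False := by simp only [Prod.mk.injEq, iff_false]; omega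
      simp only [hc1, hc2, hc3, hc4, if_false, add_zero, zero_add]
    rw [Finset.sum_congr rfl (fun a _ => hsum a), sum_pin]
    by_cases hin : d1 + 1 ∈ Finset.Icc (x.1 + 1) M ∧ d2 = x.2 + 1
    · rw [if_pos hin]
    · rw [if_neg hin, gb2 x d1 d2 h1, Finset.mem_Icc] at *
      split_ifs <;> omega

end S9

section S10

variable {D : Set Site}

open Classical

def hitCol (D : Set Site) (Y a : ℤ) : Prop := ((a, Y) : Site) ∈ D ∨ ((a, Y + 1) : Site) ∈ D

lemma claimB (hD : D.Finite) (x : Site) (a : ℤ) (ha : x.1 < a) :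
    ∑ e ∈ (BE_finite hD).toFinset, contrib D x e a
      = (if ¬ hitCol D x.2 a ∧ hitCol D x.2 (a - 1) then 1 else 0)
        - (if ¬ hitCol D x.2 a ∧ hitCol D x.2 (a + 1) then 1 else 0) := by
  set Bf := (BE_finite hD).toFinset with hBf
  have hmem : ∀ ε : Site × Site, ε ∈ Bf ↔ ε ∈ BE D := fun ε => Set.Finite.mem_toFinset _
  unfold contrib
  rw [Finset.sum_add_distrib, Finset.sum_add_distrib, Finset.sum_add_distrib]
  rw [Finset.sum_ite_eq' Bf (eU1 x.2 a) (gb D x),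
      Finset.sum_ite_eq' Bf (eU2 x.2 a) (gb D x),
      Finset.sum_ite_eq' Bf (eD1 x.2 a) (gb D x),
      Finset.sum_ite_eq' Bf (eD2 x.2 a) (gb D x)]
  have m1 : eU1 x.2 a ∈ Bf ↔ (((a - 1, x.2) : Site) ∈ D ∧ ((a, x.2) : Site) ∉ D) := by
    rw [hmem]
    unfold eU1
    constructor
    · rintro ⟨p, q, -⟩; exact ⟨p, q⟩
    · rintro ⟨p, q⟩; exact ⟨p, q, plusAdj_mk (by omega)⟩
  have m2 : eU2 x.2 a ∈ Bf ↔ (((a - 1, x.2 + 1) : Site) ∈ D ∧ ((a - 1, x.2) : Site) ∉ D) := by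
    rw [hmem]
    unfold eU2
    constructor
    · rintro ⟨p, q, -⟩; exact ⟨p, q⟩
    · rintro ⟨p, q⟩; exact ⟨p, q, plusAdj_mk (by omega)⟩
  have m3 : eD1 x.2 a ∈ Bf ↔ (((a + 1, x.2 + 1) : Site) ∈ D ∧ ((a, x.2 + 1) : Site) ∉ D) := by
    rw [hmem]
    unfold eD1
    constructor
    · rintro ⟨p, q, -⟩; exact ⟨p, q⟩
    · rintro ⟨p, q⟩; exact ⟨p, q, plusAdj_mk (by omega)⟩
  have m4 : eD2 x.2 a ∈ Bf ↔ (((a + 1, x.2) : Site) ∈ D ∧ ((a + 1, x.2 + 1) : Site) ∉ D) := by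
    rw [hmem]
    unfold eD2
    constructor
    · rintro ⟨p, q, -⟩; exact ⟨p, q⟩
    · rintro ⟨p, q⟩; exact ⟨p, q, plusAdj_mk (by omega)⟩
  -- values
  have v1 : ∀ h : ((a - 1, x.2) : Site) ∈ D, gb D x (eU1 x.2 a)
      = if ((a, x.2 + 1) : Site) ∈ D then 0 else 1 := by
    intro h
    have heq : (eU1 x.2 a) = (((a - 1, x.2), (a - 1 + 1, x.2)) : Site × Site) := by
      unfold eU1; norm_num
    rw [heq, gb1 x (a - 1) x.2 h]
    norm_num
    split_ifs <;> first | rfl | omega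
  have v2 : ∀ h : ((a - 1, x.2 + 1) : Site) ∈ D, gb D x (eU2 x.2 a)
      = if ((a, x.2) : Site) ∈ D then 0 else if ((a, x.2 + 1) : Site) ∈ D then 0 else 1 := by
    intro h
    have heq : (eU2 x.2 a) = (((a - 1, x.2 + 1), (a - 1, x.2 + 1 - 1)) : Site × Site) := by
      unfold eU2; norm_num
    rw [heq, gb2 x (a - 1) (x.2 + 1) h]
    norm_num
    split_ifs <;> first | rfl | omega
  have v3 : ∀ h : ((a + 1, x.2 + 1) : Site) ∈ D, gb D x (eD1 x.2 a)
      = if ((a, x.2) : Site) ∈ D then 0 else -1 := by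
    intro h
    have heq : (eD1 x.2 a) = (((a + 1, x.2 + 1), (a + 1 - 1, x.2 + 1)) : Site × Site) := by
      unfold eD1; norm_num
    rw [heq, gb3 x (a + 1) (x.2 + 1) h]
    norm_num
    split_ifs <;> first | rfl | omega
  have v4 : ∀ h : ((a + 1, x.2) : Site) ∈ D, gb D x (eD2 x.2 a)
      = if ((a, x.2 + 1) : Site) ∈ D then 0 else if ((a, x.2) : Site) ∈ D then 0 else -1 := by
    intro h
    have heq : (eD2 x.2 a) = (((a + 1, x.2), (a + 1, x.2 + 1)) : Site × Site) := rfl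
    rw [heq, gb4 x (a + 1) x.2 h]
    norm_num
    split_ifs <;> first | rfl | omega
  by_cases A1 : ((a - 1, x.2) : Site) ∈ D <;>
    by_cases A2 : ((a - 1, x.2 + 1) : Site) ∈ D <;>
      by_cases B1 : ((a, x.2) : Site) ∈ D <;>
        by_cases B2 : ((a, x.2 + 1) : Site) ∈ D <;>
          by_cases C1 : ((a + 1, x.2) : Site) ∈ D <;>
            by_cases C2 : ((a + 1, x.2 + 1) : Site) ∈ D <;>
              (try rw [v1 A1]) <;> (try rw [v2 A2]) <;> (try rw [v3 C2]) <;> (try rw [v4 C1]) <;>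
                simp [hitCol, A1, A2, B1, B2, C1, C2, m1, m2, m3, m4]

end S10

section S11

variable {D : Set Site}

open Classical

lemma telescope_aux (F : ℤ → ℤ) : ∀ (n : ℕ) (a : ℤ),
    (∑ i ∈ Finset.Icc a (a + n - 1), (F i - F (i + 1))) = F a - F (a + n) := by
  intro n
  induction n with
  | zero =>
    intro a
    rw [Finset.Icc_eq_empty (by omega)]
    simp
  | succ n ih =>
    intro a
    have hins : Finset.Icc a (a + (n + 1 : ℕ) - 1) = insert (a + n) (Finset.Icc a (a + n - 1)) := by
      ext i
      simp only [Finset.mem_Icc, Finset.mem_insert]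
      push_cast
      omega
    rw [hins, Finset.sum_insert (by simp only [Finset.mem_Icc]; omega), ih]
    have e1 : a + n + 1 = a + (n + 1 : ℕ) := by push_cast; ring
    rw [e1]
    ring

lemma telescope (F : ℤ → ℤ) (a b : ℤ) (hb : a - 1 ≤ b) :
    (∑ i ∈ Finset.Icc a b, (F i - F (i + 1))) = F a - F (b + 1) := by
  have hn : b = a + ((b + 1 - a).toNat : ℤ) - 1 := by omega
  have hn2 : b + 1 = a + ((b + 1 - a).toNat : ℤ) := by omega
  rw [hn2]
  conv_lhs => rw [hn]
  exact telescope_aux F (b + 1 - a).toNat a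

lemma total_sum (hD : D.Finite) {x : Site} (hx : x ∈ D) :
    ∑ e ∈ (BE_finite hD).toFinset, gb D x e = 1 := by
  obtain ⟨B, hB⟩ := (hD.image Prod.fst).bddAbove
  set M := B + 1 with hMdef
  have hM : ∀ p ∈ D, p.1 < M := by
    intro p hp
    have : p.1 ≤ B := hB ⟨p, hp, rfl⟩
    omega
  have hxM : x.1 < M := hM x hx
  rw [Finset.sum_congr rfl
    (fun e he => claimA x M hM e ((Set.Finite.mem_toFinset _).1 he))]
  rw [Finset.sum_comm]
  rw [Finset.sum_congr rfl
    (fun a ha => claimB hD x a (by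
      rw [Finset.mem_Icc] at ha; omega))]
  set F : ℤ → ℤ := fun a => if hitCol D x.2 (a - 1) ∨ hitCol D x.2 a then 1 else 0 with hF
  have hnet : ∀ a ∈ Finset.Icc (x.1 + 1) M,
      ((if ¬ hitCol D x.2 a ∧ hitCol D x.2 (a - 1) then 1 else 0)
        - (if ¬ hitCol D x.2 a ∧ hitCol D x.2 (a + 1) then (1:ℤ) else 0))
      = F a - F (a + 1) := by
    intro a _
    rw [hF]
    dsimp only
    have e1 : a + 1 - 1 = a := by ring
    rw [e1]
    by_cases h1 : hitCol D x.2 (a - 1) <;> by_cases h2 : hitCol D x.2 a <;>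
      by_cases h3 : hitCol D x.2 (a + 1) <;> simp [h1, h2, h3]
  rw [Finset.sum_congr rfl hnet, telescope F (x.1 + 1) M (by omega)]
  have hF1 : F (x.1 + 1) = 1 := by
    rw [hF]
    dsimp only
    have e1 : x.1 + 1 - 1 = x.1 := by ring
    rw [e1]
    have : hitCol D x.2 x.1 := Or.inl (by rw [Prod.mk.eta]; exact hx)
    simp [this]
  have hF2 : F (M + 1) = 0 := by
    rw [hF]
    dsimp only
    have e1 : M + 1 - 1 = M := by ring
    rw [e1]
    have h1 : ¬ hitCol D x.2 M := by
      rintro (h | h)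
      · exact absurd (hM _ h) (by norm_num)
      · exact absurd (hM _ h) (by norm_num)
    have h2 : ¬ hitCol D x.2 (M + 1) := by
      rintro (h | h)
      · exact absurd (hM _ h) (by norm_num)
      · exact absurd (hM _ h) (by norm_num)
    simp [h1, h2]
  rw [hF1, hF2]
  ring

end S11

section S12

variable (ω : Site → Bool)

def starComp' (ω : Site → Bool) : Set Site :=
  {a | ω (0, 0) = true ∧ ω a = true ∧
    Relation.ReflTransGen (fun x y => ω x = true ∧ ω y = true ∧ starAdj x y) (0, 0) a}

def crel (ω : Site → Bool) (u v : Site) : Prop :=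
  u ∉ starComp' ω ∧ v ∉ starComp' ω ∧ plusAdj u v

def compSet (ω : Site → Bool) (y : Site) : Set Site :=
  {z | Relation.ReflTransGen (crel ω) y z}

def D0 (ω : Site → Bool) : Set Site :=
  starComp' ω ∪ {y | y ∉ starComp' ω ∧ (compSet ω y).Finite}

lemma origin_mem (hne : (starComp' ω).Nonempty) : ((0, 0) : Site) ∈ starComp' ω := by
  obtain ⟨a, h0, _, _⟩ := hne
  exact ⟨h0, h0, Relation.ReflTransGen.refl⟩

lemma C0_occ {y : Site} (hy : y ∈ starComp' ω) : ω y = true := hy.2.1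

lemma C0_closed {x y : Site} (hx : x ∈ starComp' ω) (hy : ω y = true)
    (hadj : starAdj x y) : y ∈ starComp' ω :=
  ⟨hx.1, hy, hx.2.2.tail ⟨hx.2.1, hy, hadj⟩⟩

lemma crel_symm {u v : Site} (h : crel ω u v) : crel ω v u :=
  ⟨h.2.1, h.1, plusAdj_symm h.2.2⟩

lemma compSet_eq {u v : Site} (hu : u ∉ starComp' ω) (hv : v ∉ starComp' ω)
    (hadj : plusAdj u v) : compSet ω u = compSet ω v := by
  ext z
  constructor
  · intro hz
    exact Relation.ReflTransGen.trans (Relation.ReflTransGen.single ⟨hv, hu, plusAdj_symm hadj⟩) hz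
  · intro hz
    exact Relation.ReflTransGen.trans (Relation.ReflTransGen.single ⟨hu, hv, hadj⟩) hz

lemma comp_infinite_ray (y : Site) (dv1 dv2 : ℤ) (hdv : |dv1| + |dv2| = 1)
    (hout : ∀ k : ℕ, ((y.1 + k * dv1, y.2 + k * dv2) : Site) ∉ starComp' ω) :
    (compSet ω y).Infinite := by
  set f : ℕ → Site := fun k => (y.1 + k * dv1, y.2 + k * dv2) with hf
  have hdv' : (dv1 = 1 ∧ dv2 = 0) ∨ (dv1 = -1 ∧ dv2 = 0) ∨ (dv1 = 0 ∧ dv2 = 1)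
      ∨ (dv1 = 0 ∧ dv2 = -1) := by
    rcases abs_cases dv1 with ⟨e1, _⟩ | ⟨e1, _⟩ <;>
      rcases abs_cases dv2 with ⟨e2, _⟩ | ⟨e2, _⟩ <;> omega
  have hinj : Function.Injective f := by
    intro a b hab
    rw [hf] at hab
    simp only [Prod.mk.injEq] at hab
    rcases hdv' with ⟨e1, e2⟩ | ⟨e1, e2⟩ | ⟨e1, e2⟩ | ⟨e1, e2⟩ <;> subst e1 <;> subst e2 <;>
      omega
  have hadj : ∀ k : ℕ, plusAdj (f k) (f (k + 1)) := by
    intro k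
    rw [hf]
    rcases hdv' with ⟨e1, e2⟩ | ⟨e1, e2⟩ | ⟨e1, e2⟩ | ⟨e1, e2⟩ <;> subst e1 <;> subst e2 <;>
      exact plusAdj_mk (by push_cast; omega)
  have hmem : ∀ k : ℕ, f k ∈ compSet ω y := by
    intro k
    induction k with
    | zero =>
      have : f 0 = y := by rw [hf]; simp
      rw [this]
      exact Relation.ReflTransGen.refl
    | succ k ih =>
      exact ih.tail ⟨hout k, hout (k + 1), hadj k⟩
  exact Set.infinite_of_injective_forall_mem hinj hmem

lemma D0_finite (hfin : (starComp' ω).Finite) : (D0 ω).Finite := by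
  obtain ⟨R, hR⟩ := (hfin.image (fun c : Site => max |c.1| |c.2|)).bddAbove
  have hRb : ∀ c ∈ starComp' ω, |c.1| ≤ R ∧ |c.2| ≤ R := by
    intro c hc
    have := hR ⟨c, hc, rfl⟩
    constructor <;>
      [exact le_trans (le_max_left _ _) this; exact le_trans (le_max_right _ _) this]
  have hsub : D0 ω ⊆ starComp' ω ∪ Set.Icc ((-R, -R) : Site) ((R, R) : Site) := by
    rintro y (hy | ⟨hy1, hy2⟩)
    · exact Or.inl hy
    · refine Or.inr ?_
      rw [Set.mem_Icc, Prod.le_def, Prod.le_def]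
      dsimp only
      by_contra hc
      push_neg at hc
      have hray : (compSet ω y).Infinite := by
        have habs : R < y.1 ∨ y.1 < -R ∨ R < y.2 ∨ y.2 < -R := by omega
        rcases habs with h | h | h | h
        · refine comp_infinite_ray ω y 1 0 (by norm_num) (fun k hk => ?_)
          have := (hRb _ hk).1
          rw [abs_le] at this
          dsimp only at this
          omega
        · refine comp_infinite_ray ω y (-1) 0 (by norm_num) (fun k hk => ?_)
          have := (hRb _ hk).1
          rw [abs_le] at this
          dsimp only at this
          omega
        · refine comp_infinite_ray ω y 0 1 (by norm_num) (fun k hk => ?_)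
          have := (hRb _ hk).2
          rw [abs_le] at this
          dsimp only at this
          omega
        · refine comp_infinite_ray ω y 0 (-1) (by norm_num) (fun k hk => ?_)
          have := (hRb _ hk).2
          rw [abs_le] at this
          dsimp only at this
          omega
      exact hray hy2
  exact Set.Finite.subset (hfin.union (Set.finite_Icc _ _)) hsub

lemma D0_not_mem {y : Site} (hy : y ∉ D0 ω) :
    y ∉ starComp' ω ∧ (compSet ω y).Infinite := by
  rw [D0, Set.mem_union] at hy
  push_neg at hy
  obtain ⟨h1, h2⟩ := hy
  simp only [Set.mem_setOf_eq, not_and] at h2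
  exact ⟨h1, h2 h1⟩

lemma Bst_sub_lambda (b : Site) (hb : b ∈ Bst (D0 ω)) :
    ω b = false ∧ ∃ c ∈ starComp' ω, starAdj b c := by
  obtain ⟨hbD, d, hdD, hstar⟩ := hb
  obtain ⟨hbC, hbI⟩ := D0_not_mem ω hbD
  -- find a C0 site star-adjacent to b
  have hc : ∃ c ∈ starComp' ω, starAdj b c := by
    rcases hdD with hdC | ⟨hdC, hdF⟩
    · exact ⟨d, hdC, hstar⟩
    · -- d is in a hole
      obtain ⟨hne, ha1, ha2⟩ := hstar
      rw [abs_le] at ha1 ha2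
      by_cases hpa : plusAdj b d
      · exfalso
        rw [compSet_eq ω hbC hdC hpa] at hbI
        exact hbI hdF
      · -- diagonal
        have hdiag : (b.1 - d.1 = 1 ∨ b.1 - d.1 = -1) ∧ (b.2 - d.2 = 1 ∨ b.2 - d.2 = -1) := by
          unfold plusAdj at hpa
          have hne' : ¬(b.1 = d.1 ∧ b.2 = d.2) := by
            intro hcc
            exact hne (Prod.ext hcc.1 hcc.2)
          rcases abs_cases (b.1 - d.1) with ⟨e1, _⟩ | ⟨e1, _⟩ <;>
            rcases abs_cases (b.2 - d.2) with ⟨e2, _⟩ | ⟨e2, _⟩ <;> omega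
        set c2 : Site := (b.1, d.2) with hc2
        have hadj_c2b : plusAdj c2 b := by
          rcases b with ⟨b1, b2⟩
          exact plusAdj_mk (by dsimp only at hdiag ⊢; omega)
        have hadj_c2d : plusAdj c2 d := by
          rcases d with ⟨e1', e2'⟩
          exact plusAdj_mk (by dsimp only at hdiag ⊢; omega)
        have hc2C : c2 ∈ starComp' ω := by
          by_contra hc2C
          have h1 : compSet ω c2 = compSet ω d := compSet_eq ω hc2C hdC hadj_c2d
          have h2 : compSet ω c2 = compSet ω b := compSet_eq ω hc2C hbC hadj_c2b
          rw [h2] at h1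
          rw [h1] at hbI
          exact hbI hdF
        exact ⟨c2, hc2C, starAdj_symm (plusAdj_to_star hadj_c2b)⟩
  obtain ⟨c, hcC, hbc⟩ := hc
  refine ⟨?_, c, hcC, hbc⟩
  by_cases hω : ω b = true
  · exact absurd (C0_closed ω hcC hω (starAdj_symm hbc)) hbC
  · simpa using hω

lemma list_bound (L : List Site) : ∃ K : ℤ, 0 < K ∧ ∀ u ∈ L, |u.1| < K ∧ |u.2| < K := by
  induction L with
  | nil => exact ⟨1, by norm_num, by simp⟩
  | cons a t ih =>
    obtain ⟨K, hK0, hK⟩ := ih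
    refine ⟨max K (|a.1| + |a.2| + 1), lt_of_lt_of_le hK0 (le_max_left _ _), ?_⟩
    intro u hu
    rcases List.mem_cons.1 hu with rfl | hu
    · have h1 := le_max_right K (|u.1| + |u.2| + 1)
      have h2 := abs_nonneg u.1
      have h3 := abs_nonneg u.2
      omega
    · have h1 := le_max_left K (|a.1| + |a.2| + 1)
      have := hK u hu
      omega

end S12

/-- If `C(0)` is finite and nonempty, there is a plus-connected
`S`-cycle with sites in `Λ₀` met by every infinite plus-connected path starting
in `C(0)`. -/
theorem starComp_cycle_blocks_infinite_paths (ω : Site → Bool)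
    (hfin : (starComp ω).Finite) (hne : (starComp ω).Nonempty) :
    ∃ L : List Site, IsPlusSCycle L ∧ (∀ y ∈ L, y ∈ lambda0 ω) ∧
      ∀ p : ℕ → Site, Function.Injective p → p 0 ∈ starComp ω →
        (∀ n : ℕ, plusAdj (p n) (p (n + 1))) → ∃ n : ℕ, p n ∈ L := by
  have hfin' : (starComp' ω).Finite := hfin
  have hne' : (starComp' ω).Nonempty := hne
  have hD : (D0 ω).Finite := D0_finite ω hfin'
  set x₀ : Site := (0, 0) with hx₀def
  have hx₀D : x₀ ∈ D0 ω := Or.inl (origin_mem ω hne')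
  have htot := total_sum hD hx₀D
  obtain ⟨e', he'BE, m', hm'0, hm', hmin', hκ, hsum'⟩ :=
    orbit_extract hD (gb (D0 ω) x₀) (BE_finite hD).toFinset.card (BE_finite hD).toFinset
      le_rfl
      (by rw [Set.Finite.coe_toFinset])
      (fun f hf => (Set.Finite.mem_toFinset _).2 (bsucc_mem ((Set.Finite.mem_toFinset _).1 hf)))
      (by rw [htot]; norm_num)
  have hnr : e'.2 + rot (e'.2 - e'.1) ∉ D0 ω := fun hmem => hκ (gb_right hmem)
  obtain ⟨hcwW, hmemW, hwdW⟩ := walk_closed he'BE hnr hm'0 hm' x₀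
  have hwdW0 : wd x₀ (walkF (D0 ω) e' m') ≠ 0 := by rw [hwdW]; exact hsum'
  obtain ⟨L, hcwL, hnodup, hsubL, hwdL⟩ :=
    loop_erase (walkF (D0 ω) e' m').length (walkF (D0 ω) e' m') le_rfl hcwW x₀ hwdW0
  have hLlam : ∀ y ∈ L, y ∈ lambda0 ω := by
    intro y hy
    have hBst := hmemW y (hsubL y hy)
    obtain ⟨h1, c, hcC, hbc⟩ := Bst_sub_lambda ω y hBst
    exact ⟨h1, c, hcC, hbc⟩
  obtain ⟨hLne, hLch⟩ := hcwL
  have hchain := List.isChain_append.1 hLch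
  have hcycle : IsPlusSCycle L := by
    refine ⟨hLne, hnodup, hchain.1, ?_⟩
    intro a ha b hb
    rw [head?_eq hLne] at ha
    simp only [Option.mem_def, Option.some.injEq] at ha
    subst ha
    exact hchain.2.2 b hb L.headI (by simp)
  refine ⟨L, hcycle, hLlam, ?_⟩
  intro p hp hp0 hstep
  by_contra hcon
  push_neg at hcon
  have hC0L : ∀ z, z ∈ starComp' ω → z ∉ L := by
    intro z hz hzL
    have h1 := (hLlam z hzL).1
    rw [C0_occ ω hz] at h1
    exact absurd h1 (by simp)
  have hwd_p0 : wd (p 0) L = wd x₀ L := by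
    obtain ⟨h00, hpo, hRTG⟩ := hp0
    have key : ∀ z : Site,
        Relation.ReflTransGen (fun x y => ω x = true ∧ ω y = true ∧ starAdj x y) (0, 0) z →
        z ∈ starComp' ω ∧ wd z L = wd x₀ L := by
      intro z hz
      induction hz with
      | refl => exact ⟨⟨h00, h00, .refl⟩, rfl⟩
      | tail hab hbc ih =>
        rename_i b c
        obtain ⟨hbC, hwb⟩ := ih
        have hcC : c ∈ starComp' ω := C0_closed ω hbC hbc.2.1 hbc.2.2
        refine ⟨hcC, ?_⟩
        rw [← hwb]
        exact (wd_eq_of_starAdj ⟨hLne, hLch⟩ hbc.2.2 (hC0L b hbC) (hC0L c hcC)).symm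
    exact (key (p 0) hRTG).2
  have hconst : ∀ n, wd (p n) L = wd x₀ L := by
    intro n
    induction n with
    | zero => exact hwd_p0
    | succ n ih =>
      rw [← ih]
      exact (wd_eq_of_starAdj ⟨hLne, hLch⟩ (plusAdj_to_star (hstep n))
        (hcon n) (hcon (n + 1))).symm
  obtain ⟨K, hK0, hK⟩ := list_bound L
  have hbox : (Set.Icc ((-K, -K) : Site) ((K, K) : Site)).Finite := Set.finite_Icc _ _
  have hesc : ∃ N, p N ∉ Set.Icc ((-K, -K) : Site) ((K, K) : Site) := by
    by_contra hallin
    push_neg at hallin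
    exact Set.infinite_range_of_injective hp
      (hbox.subset (by rintro z ⟨n, rfl⟩; exact hallin n))
  obtain ⟨N, hN⟩ := hesc
  have hcase : K < (p N).1 ∨ (p N).1 < -K ∨ K < (p N).2 ∨ (p N).2 < -K := by
    by_contra hcc
    push_neg at hcc
    refine hN (Set.mem_Icc.2 ⟨?_, ?_⟩) <;> rw [Prod.le_def] <;> dsimp only <;>
      constructor <;> omega
  have hzero : wd (p N) L = 0 := by
    rcases hcase with h | h | h | h
    · refine wd_zero_right _ _ (fun u hu => ?_)
      have h2 := (hK u hu).1
      rw [abs_lt] at h2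
      omega
    · refine wd_zero_left _ _ ⟨hLne, hLch⟩ (fun u hu => ?_)
      have h2 := (hK u hu).1
      rw [abs_lt] at h2
      omega
    · refine wd_zero_rows _ _ (fun u hu => ?_)
      have h2 := (hK u hu).2
      rw [abs_lt] at h2
      omega
    · refine wd_zero_rows _ _ (fun u hu => ?_)
      have h2 := (hK u hu).2
      rw [abs_lt] at h2
      omega
  rw [hconst N] at hzero
  exact hwdL hzero
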